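/- arXiv:2403.00399 — 2 statements merged into one kernel-verified Lean document; each statement's English description precedes it below -/
import Mathlib

section
/- Let G be a quantitative reachability game with players P = {0,1,…,t}, vertex set V, initial vertex v_0, and let c ∈ ℕ. There exist a strategy σ_0 of player 0 and a σ_0-fixed Nash equilibrium whose outcome π satisfies cost_0(π) ≤ c, if and only if there exists a lasso play π′ = μ(ν)^ω from v_0 that is Visit Val*-consistent for P∖{0}, satisfies cost_0(π′) ≤ c, and has |μν| ≤ (|P|+2)·|V|. -/
open scoped Classical

/-- An infinite play in the graph with edge relation `E`. -/
def IsPlay {V : Type*} (E : V → V → Prop) (π : ℕ → V) : Prop :=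
  ∀ k, E (π k) (π (k + 1))

/-- The history `π 0, …, π k` as a list. -/
def histList {V : Type*} (π : ℕ → V) (k : ℕ) : List V :=
  (List.range (k + 1)).map π

/-- The accumulated weight of the first `n` edges of `π`. -/
def pathWeight {V : Type*} (w : V → V → ℕ) (π : ℕ → V) (n : ℕ) : ℕ :=
  ∑ j ∈ Finset.range n, w (π j) (π (j + 1))

/-- The cost of a play for weight function `w` and target set `T`. -/
noncomputable def cost {V : Type*} (w : V → V → ℕ) (T : Set V) (π : ℕ → V) : ℕ∞ :=
  if h : ∃ n, π n ∈ T then (pathWeight w π (Nat.find h) : ℕ∞) else ⊤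

/-- `σ` is a strategy for player `i` in a game where `own v` is the owner of `v`. -/
def IsStrategyFor {V P : Type*} (E : V → V → Prop) (own : V → P) (i : P)
    (σ : List V → V) : Prop :=
  ∀ (l : List V) (u : V), List.Chain' E (l ++ [u]) → own u = i → E u (σ (l ++ [u]))

/-- A play is consistent with the strategy `σ` of player `i`. -/
def ConsistentFor {V P : Type*} (own : V → P) (i : P) (σ : List V → V)
    (π : ℕ → V) : Prop :=
  ∀ k, own (π k) = i → π (k + 1) = σ (histList π k)

/-- A play is the outcome of the strategy profile `σ`: at each step the owner's
strategy chooses the next vertex. -/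
def ProfConsistent {V P : Type*} (own : V → P) (σ : P → List V → V)
    (π : ℕ → V) : Prop :=
  ∀ k, π (k + 1) = σ (own (π k)) (histList π k)

/-- The value `Val_i(v)` of vertex `v` for player `i` against the coalition of the
other players: the inf over strategies of player `i` of the sup of the costs of the
plays from `v` consistent with that strategy. -/
noncomputable def Val {V P : Type*} (E : V → V → Prop) (own : V → P)
    (w : P → V → V → ℕ) (T : P → Set V) (i : P) (v : V) : ℕ∞ :=
  ⨅ σ : {σ : List V → V // IsStrategyFor E own i σ},
    ⨆ π : {π : ℕ → V // IsPlay E π ∧ π 0 = v ∧ ConsistentFor own i σ.1 π},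
      cost (w i) (T i) π.1

/-- `π` is Visit `Val*`-consistent for the set `I` of players. -/
def VisitValConsistent {V P : Type*} (E : V → V → Prop) (own : V → P)
    (w : P → V → V → ℕ) (T : P → Set V) (I : Set P) (π : ℕ → V) : Prop :=
  ∀ i ∈ I, ∀ n, own (π n) = i → (¬ ∃ k < n, π k ∈ T i) →
    cost (w i) (T i) (fun m => π (n + m)) ≤ Val E own w T i (π n)

/-- `σ` is a `σ 0`-fixed Nash equilibrium with outcome `π` from `v0`: no player
`i ≠ 0` can strictly decrease his cost by unilaterally deviating. -/
def IsNE {V : Type*} {t : ℕ} (E : V → V → Prop) (own : V → Fin (t + 1))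
    (w : Fin (t + 1) → V → V → ℕ) (T : Fin (t + 1) → Set V) (v0 : V)
    (σ : Fin (t + 1) → List V → V) (π : ℕ → V) : Prop :=
  (∀ i, IsStrategyFor E own i (σ i)) ∧ IsPlay E π ∧ π 0 = v0 ∧
    ProfConsistent own σ π ∧
    ∀ i : Fin (t + 1), i ≠ 0 → ∀ τ : List V → V, IsStrategyFor E own i τ →
      ∀ π' : ℕ → V, IsPlay E π' → π' 0 = v0 →
        ProfConsistent own (Function.update σ i τ) π' →
        cost (w i) (T i) π ≤ cost (w i) (T i) π'

/-- `π` is a lasso `μ (ν)^ω` where `|μ| = a` and `|ν| = b`. -/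
def IsLasso {V : Type*} (π : ℕ → V) (a b : ℕ) : Prop :=
  0 < b ∧ ∀ k, a ≤ k → π (k + b) = π k

namespace CNS

variable {V : Type*}

lemma histList_length (π : ℕ → V) (k : ℕ) : (histList π k).length = k + 1 := by
  simp [histList]

lemma histList_succ (π : ℕ → V) (k : ℕ) :
    histList π (k + 1) = histList π k ++ [π (k + 1)] := by
  simp [histList, List.range_succ]

lemma histList_zero (π : ℕ → V) : histList π 0 = [π 0] := rfl

lemma histList_getLastD (π : ℕ → V) (k : ℕ) (x : V) :
    (histList π k).getLastD x = π k := by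
  cases k with
  | zero => simp [histList_zero]
  | succ k => rw [histList_succ, List.getLastD_concat]

lemma histList_getLast? (π : ℕ → V) (k : ℕ) :
    (histList π k).getLast? = some (π k) := by
  cases k with
  | zero => simp [histList_zero]
  | succ k => rw [histList_succ, List.getLast?_concat]

lemma histList_eq_iff (π π' : ℕ → V) (k : ℕ) :
    histList π k = histList π' k ↔ ∀ j ≤ k, π j = π' j := by
  constructor
  · intro h j hj
    have h1 : (histList π k)[j]? = (histList π' k)[j]? := by rw [h]
    simp only [histList, List.getElem?_map, List.getElem?_range, Nat.lt_succ_iff, hj,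
      if_pos, Option.map_some] at h1
    exact Option.some.inj h1
  · intro h
    unfold histList
    apply List.map_congr_left
    intro j hj
    exact h j (by simpa [Nat.lt_succ_iff] using List.mem_range.1 hj)

lemma histList_take (π : ℕ → V) (k n : ℕ) (h : n ≤ k) :
    (histList π k).take (n + 1) = histList π n := by
  unfold histList
  rw [← List.map_take, List.take_range]
  congr 2
  omega

lemma histList_chain' {E : V → V → Prop} {π : ℕ → V} (hπ : IsPlay E π ) (k : ℕ) :
    List.Chain' E (histList π k) := by
  induction k with
  | zero => simp [histList_zero]; exact List.isChain_singleton _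
  | succ k ih =>
      rw [histList_succ, List.Chain', List.isChain_append]
      refine ⟨ih, List.isChain_singleton _, ?_⟩
      intro x hx y hy
      rw [histList_getLast?] at hx
      simp at hx hy
      subst hx; subst hy
      exact hπ k

lemma histList_drop (π : ℕ → V) (n k : ℕ) :
    (histList π (n + k)).drop n = histList (fun m => π (n + m)) k := by
  apply List.ext_getElem
  · simp [histList_length]; omega
  · intro j h1 h2
    simp [histList] at h1 h2 ⊢

lemma pathWeight_zero (w : V → V → ℕ) (π : ℕ → V) : pathWeight w π 0 = 0 := by
  simp [pathWeight]

lemma pathWeight_succ (w : V → V → ℕ) (π : ℕ → V) (n : ℕ) :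
    pathWeight w π (n + 1) = pathWeight w π n + w (π n) (π (n + 1)) := by
  simp [pathWeight, Finset.sum_range_succ]

lemma pathWeight_mono (w : V → V → ℕ) (π : ℕ → V) {m n : ℕ} (h : m ≤ n) :
    pathWeight w π m ≤ pathWeight w π n :=
  Finset.sum_le_sum_of_subset (Finset.range_subset_range.2 h)

lemma pathWeight_congr {w : V → V → ℕ} {π π' : ℕ → V} {n : ℕ}
    (h : ∀ j ≤ n, π j = π' j) : pathWeight w π n = pathWeight w π' n := by
  unfold pathWeight
  apply Finset.sum_congr rfl
  intro j hj
  rw [Finset.mem_range] at hj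
  rw [h j (by omega), h (j+1) (by omega)]

lemma pathWeight_shift (w : V → V → ℕ) (π : ℕ → V) (k m : ℕ) :
    pathWeight w π (k + m) = pathWeight w π k + pathWeight w (fun j => π (k + j)) m := by
  induction m with
  | zero => simp [pathWeight_zero]
  | succ m ih =>
      rw [← Nat.add_assoc, pathWeight_succ, ih]
      conv_rhs => rw [pathWeight_succ]
      exact Nat.add_assoc _ _ _

lemma cost_eq {w : V → V → ℕ} {T : Set V} {π : ℕ → V} (h : ∃ n, π n ∈ T) :
    cost w T π = (pathWeight w π (Nat.find h) : ℕ∞) := by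
  rw [cost, dif_pos h]

lemma cost_eq_top {w : V → V → ℕ} {T : Set V} {π : ℕ → V} (h : ¬ ∃ n, π n ∈ T) :
    cost w T π = ⊤ := by
  rw [cost, dif_neg h]

lemma cost_zero {w : V → V → ℕ} {T : Set V} {π : ℕ → V} (h : π 0 ∈ T) :
    cost w T π = 0 := by
  have hex : ∃ n, π n ∈ T := ⟨0, h⟩
  rw [cost_eq hex]
  have : Nat.find hex = 0 := Nat.le_zero.1 (Nat.find_le h)
  rw [this, pathWeight_zero]; rfl

lemma cost_eq_of_agree {w : V → V → ℕ} {T : Set V} {π π' : ℕ → V} {n : ℕ}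
    (hag : ∀ j ≤ n, π j = π' j) (hv : ∃ j ≤ n, π j ∈ T) :
    cost w T π = cost w T π' := by
  obtain ⟨j0, hj0, hj0T⟩ := hv
  have h : ∃ m, π m ∈ T := ⟨j0, hj0T⟩
  have h' : ∃ m, π' m ∈ T := ⟨j0, by rwa [← hag j0 hj0]⟩
  have hle : Nat.find h ≤ n := le_trans (Nat.find_le hj0T) hj0
  have hle' : Nat.find h' ≤ n := le_trans (Nat.find_le (by rwa [← hag j0 hj0])) hj0
  have heq : Nat.find h = Nat.find h' := by
    apply le_antisymm
    · exact Nat.find_le (by rw [hag _ hle']; exact Nat.find_spec h')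
    · exact Nat.find_le (by rw [← hag _ hle]; exact Nat.find_spec h)
  rw [cost_eq h, cost_eq h', heq]
  exact congrArg _ (pathWeight_congr (fun j hj => hag j (le_trans hj hle')))

lemma cost_shift_add {w : V → V → ℕ} {T : Set V} {π : ℕ → V} {n : ℕ}
    (h : ∀ j < n, π j ∉ T) :
    cost w T π = (pathWeight w π n : ℕ∞) + cost w T (fun m => π (n + m)) := by
  by_cases hex : ∃ m, (fun m => π (n + m)) m ∈ T
  · have hex' : ∃ m, π m ∈ T := ⟨n + Nat.find hex, Nat.find_spec hex⟩
    rw [cost_eq hex', cost_eq hex]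
    have h1 : Nat.find hex' = n + Nat.find hex := by
      apply le_antisymm
      · exact Nat.find_le (Nat.find_spec hex)
      · have h2 : n ≤ Nat.find hex' := by
          by_contra hc
          exact h _ (by omega) (Nat.find_spec hex')
        have h3 : (fun m => π (n + m)) (Nat.find hex' - n) ∈ T := by
          show π (n + (Nat.find hex' - n)) ∈ T
          rw [show n + (Nat.find hex' - n) = Nat.find hex' by omega]
          exact Nat.find_spec hex'
        have h4 : Nat.find hex ≤ Nat.find hex' - n := Nat.find_le h3
        omega
    rw [h1, pathWeight_shift]
    push_cast
    rfl
  · have hex' : ¬ ∃ m, π m ∈ T := by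
      rintro ⟨m, hm⟩
      have hn : n ≤ m := by
        by_contra hc
        exact h m (by omega) hm
      refine hex ⟨m - n, ?_⟩
      show π (n + (m - n)) ∈ T
      rwa [show n + (m - n) = m by omega]
    rw [cost_eq_top hex', cost_eq_top hex]
    simp

section Determinacy

variable [Fintype V] {P : Type*} (E : V → V → Prop) (own : V → P)
  (i : P) (wi : V → V → ℕ) (Ti : Set V)

noncomputable def succs (v : V) : Finset V := Finset.univ.filter (fun u => E v u)

lemma mem_succs {v u : V} : u ∈ succs E v ↔ E v u := by simp [succs]

lemma succs_nonempty (hE : ∀ u, ∃ v, E u v) (v : V) : (succs E v).Nonempty := by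
  obtain ⟨u, hu⟩ := hE v; exact ⟨u, (mem_succs E).2 hu⟩

variable (hE : ∀ u, ∃ v, E u v)

noncomputable def DD (hE : ∀ u, ∃ v, E u v) : ℕ → V → ℕ∞
  | 0 => fun v => if v ∈ Ti then 0 else ⊤
  | (n+1) => fun v =>
      if v ∈ Ti then 0
      else if own v = i then
        (succs E v).inf' (succs_nonempty E hE v) (fun u => (wi v u : ℕ∞) + DD hE n u)
      else (succs E v).sup' (succs_nonempty E hE v) (fun u => (wi v u : ℕ∞) + DD hE n u)

lemma DD_target (n : ℕ) {v : V} (hv : v ∈ Ti) : DD E own i wi Ti hE n v = 0 := by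
  cases n <;> simp [DD, hv]

lemma DD_anti : ∀ n, ∀ v, DD E own i wi Ti hE (n+1) v ≤ DD E own i wi Ti hE n v := by
  intro n
  induction n with
  | zero =>
      intro v
      by_cases hv : v ∈ Ti
      · simp [DD, hv]
      · simp [DD, hv]
  | succ n ih =>
      intro v
      show DD E own i wi Ti hE (n+2) v ≤ DD E own i wi Ti hE (n+1) v
      by_cases hv : v ∈ Ti
      · simp [DD, hv]
      · by_cases hown : own v = i
        · simp only [DD, if_neg hv, if_pos hown]
          apply Finset.le_inf'
          intro u hu
          exact le_trans (Finset.inf'_le _ hu) (add_le_add le_rfl (ih u))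
        · simp only [DD, if_neg hv, if_neg hown]
          apply Finset.sup'_le
          intro u hu
          exact le_trans (add_le_add le_rfl (ih u))
            (Finset.le_sup' (fun u => (wi v u : ℕ∞) + DD E own i wi Ti hE n u) hu)

lemma DD_anti' {m n : ℕ} (h : m ≤ n) (v : V) :
    DD E own i wi Ti hE n v ≤ DD E own i wi Ti hE m v := by
  induction n with
  | zero =>
      have : m = 0 := by omega
      subst this; rfl
  | succ n ih =>
      rcases Nat.lt_or_ge m (n+1) with h1 | h1
      · exact le_trans (DD_anti E own i wi Ti hE n v) (ih (by omega))
      · have : m = n + 1 := by omega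
        subst this; rfl

lemma DD_stab : ∃ N, ∀ v, ∀ m, N ≤ m →
    DD E own i wi Ti hE m v = DD E own i wi Ti hE N v := by
  have hv : ∀ v : V, ∃ N, ∀ m, N ≤ m →
      DD E own i wi Ti hE m v = DD E own i wi Ti hE N v := by
    intro v
    obtain ⟨x, ⟨N, hN⟩, hmin⟩ := (wellFounded_lt (α := ℕ∞)).has_min
      (Set.range (fun n => DD E own i wi Ti hE n v)) ⟨_, ⟨0, rfl⟩⟩
    refine ⟨N, fun m hm => ?_⟩
    have h1 : DD E own i wi Ti hE m v ≤ DD E own i wi Ti hE N v := DD_anti' E own i wi Ti hE hm v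
    have h2 : ¬ DD E own i wi Ti hE m v < x := hmin _ ⟨m, rfl⟩
    simp only at hN
    rw [← hN] at h2
    exact le_antisymm h1 (not_lt.1 h2)
  choose g hg using hv
  refine ⟨Finset.univ.sup g, fun v m hm => ?_⟩
  have h1 : g v ≤ Finset.univ.sup g := Finset.le_sup (Finset.mem_univ v)
  rw [hg v m (le_trans h1 hm), hg v (Finset.univ.sup g) h1]

noncomputable def NN : ℕ := (DD_stab E own i wi Ti hE).choose

lemma NN_spec : ∀ v, ∀ m, NN E own i wi Ti hE ≤ m →
    DD E own i wi Ti hE m v = DD E own i wi Ti hE (NN E own i wi Ti hE) v :=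
  (DD_stab E own i wi Ti hE).choose_spec

noncomputable def dval : V → ℕ∞ := DD E own i wi Ti hE (NN E own i wi Ti hE)

lemma dval_eq_DD_succ (v : V) :
    dval E own i wi Ti hE v = DD E own i wi Ti hE (NN E own i wi Ti hE + 1) v :=
  (NN_spec E own i wi Ti hE v _ (Nat.le_succ _)).symm

lemma dval_target {v : V} (hv : v ∈ Ti) : dval E own i wi Ti hE v = 0 :=
  DD_target E own i wi Ti hE _ hv

lemma dval_le_step_i {v u : V} (hv : v ∉ Ti) (hown : own v = i) (hu : E v u) :
    dval E own i wi Ti hE v ≤ (wi v u : ℕ∞) + dval E own i wi Ti hE u := by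
  rw [dval_eq_DD_succ]
  show DD E own i wi Ti hE (NN E own i wi Ti hE + 1) v ≤ _
  simp only [DD, if_neg hv, if_pos hown]
  exact Finset.inf'_le _ ((mem_succs E).2 hu)

lemma dval_sup_c {v : V} (hv : v ∉ Ti) (hown : own v ≠ i) :
    dval E own i wi Ti hE v = (succs E v).sup' (succs_nonempty E hE v)
      (fun u => (wi v u : ℕ∞) + dval E own i wi Ti hE u) := by
  rw [dval_eq_DD_succ]
  show DD E own i wi Ti hE (NN E own i wi Ti hE + 1) v = _
  simp only [DD, if_neg hv, if_neg hown]
  rfl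

/-- The positional punishing strategy of the coalition against player `i`. -/
noncomputable def punish (v : V) : V :=
  if h : own v ≠ i ∧ v ∉ Ti then
    ((Finset.exists_mem_eq_sup' (succs_nonempty E hE v)
      (fun u => (wi v u : ℕ∞) + dval E own i wi Ti hE u)).choose)
  else Classical.choose (hE v)

lemma punish_edge (v : V) : E v (punish E own i wi Ti hE v) := by
  unfold punish
  split
  · next h =>
      have := (Finset.exists_mem_eq_sup' (succs_nonempty E hE v)
        (fun u => (wi v u : ℕ∞) + dval E own i wi Ti hE u)).choose_spec
      exact (mem_succs E).1 this.1
  · exact Classical.choose_spec (hE v)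

lemma punish_opt {v : V} (hown : own v ≠ i) (hv : v ∉ Ti) :
    dval E own i wi Ti hE v =
      (wi v (punish E own i wi Ti hE v) : ℕ∞) +
        dval E own i wi Ti hE (punish E own i wi Ti hE v) := by
  unfold punish
  rw [dif_pos ⟨hown, hv⟩]
  have := (Finset.exists_mem_eq_sup' (succs_nonempty E hE v)
    (fun u => (wi v u : ℕ∞) + dval E own i wi Ti hE u)).choose_spec
  rw [dval_sup_c E own i wi Ti hE hv hown]
  exact this.2

/-- Lemma A: against the positional punishing strategy, player `i` pays at least `dval`. -/
lemma lemA (ρ : ℕ → V) (hρ : IsPlay E ρ)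
    (hco : ∀ k, own (ρ k) ≠ i → ρ (k+1) = punish E own i wi Ti hE (ρ k)) :
    dval E own i wi Ti hE (ρ 0) ≤ cost wi Ti ρ := by
  by_cases h : ∃ n, ρ n ∈ Ti
  · rw [cost_eq h]
    set n := Nat.find h with hn
    have claim : ∀ k, k ≤ n →
        dval E own i wi Ti hE (ρ 0) ≤ (pathWeight wi ρ k : ℕ∞) + dval E own i wi Ti hE (ρ k) := by
      intro k
      induction k with
      | zero => intro _; simp [pathWeight_zero]
      | succ k ih =>
          intro hk
          have hnotT : ρ k ∉ Ti := Nat.find_min h (by omega)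
          have hstep : dval E own i wi Ti hE (ρ k) ≤
              (wi (ρ k) (ρ (k+1)) : ℕ∞) + dval E own i wi Ti hE (ρ (k+1)) := by
            by_cases hown : own (ρ k) = i
            · exact dval_le_step_i E own i wi Ti hE hnotT hown (hρ k)
            · rw [hco k hown]
              exact le_of_eq (punish_opt E own i wi Ti hE hown hnotT)
          calc dval E own i wi Ti hE (ρ 0)
              ≤ (pathWeight wi ρ k : ℕ∞) + dval E own i wi Ti hE (ρ k) := ih (by omega)
            _ ≤ (pathWeight wi ρ k : ℕ∞) +
                ((wi (ρ k) (ρ (k+1)) : ℕ∞) + dval E own i wi Ti hE (ρ (k+1))) :=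
                add_le_add le_rfl hstep
            _ = (pathWeight wi ρ (k+1) : ℕ∞) + dval E own i wi Ti hE (ρ (k+1)) := by
                rw [pathWeight_succ]; push_cast; ring
    have := claim n le_rfl
    rwa [dval_target E own i wi Ti hE (Nat.find_spec h), add_zero] at this
  · rw [cost_eq_top h]; exact le_top

noncomputable def moveB (m : ℕ) (u : V) : V :=
  if h : ∃ u', E u u' ∧ (wi u u' : ℕ∞) + DD E own i wi Ti hE m u' ≤ DD E own i wi Ti hE (m+1) u
  then h.choose else Classical.choose (hE u)

lemma moveB_edge (m : ℕ) (u : V) : E u (moveB E own i wi Ti hE m u) := by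
  unfold moveB
  split
  · next h => exact h.choose_spec.1
  · exact Classical.choose_spec (hE u)

lemma moveB_opt {u : V} (m : ℕ) (hv : u ∉ Ti) (hown : own u = i) :
    (wi u (moveB E own i wi Ti hE m u) : ℕ∞) +
      DD E own i wi Ti hE m (moveB E own i wi Ti hE m u) ≤ DD E own i wi Ti hE (m+1) u := by
  have hex : ∃ u', E u u' ∧
      (wi u u' : ℕ∞) + DD E own i wi Ti hE m u' ≤ DD E own i wi Ti hE (m+1) u := by
    obtain ⟨u', hu', heq⟩ := Finset.exists_mem_eq_inf' (succs_nonempty E hE u)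
      (fun u' => (wi u u' : ℕ∞) + DD E own i wi Ti hE m u')
    refine ⟨u', (mem_succs E).1 hu', ?_⟩
    have : DD E own i wi Ti hE (m+1) u = (succs E u).inf' (succs_nonempty E hE u)
        (fun u' => (wi u u' : ℕ∞) + DD E own i wi Ti hE m u') := by
      simp only [DD, if_neg hv, if_pos hown]
    rw [this, heq]
  unfold moveB
  rw [dif_pos hex]
  exact hex.choose_spec.2

/-- Lemma B : the value of player `i` at `v` is at most `dval v`. -/
lemma lemB (w : P → V → V → ℕ) (T : P → Set V) (v : V) :
    Val E own w T i v ≤ dval E own i (w i) (T i) hE v := by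
  set d := dval E own i (w i) (T i) hE v with hd
  by_cases hdt : d = ⊤
  · rw [hdt]; exact le_top
  set N := NN E own i (w i) (T i) hE with hN
  set σB : List V → V :=
    fun l => moveB E own i (w i) (T i) hE (N - l.length) (l.getLastD v) with hσB
  have hstrat : IsStrategyFor E own i σB := by
    intro l u _ _
    show E u (σB (l ++ [u]))
    simp only [hσB, List.getLastD_concat]
    exact moveB_edge E own i (w i) (T i) hE _ u
  refine le_trans (iInf_le _ ⟨σB, hstrat⟩) (iSup_le ?_)
  rintro ⟨ρ, hplay, h0, hcons⟩
  show cost (w i) (T i) ρ ≤ d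
  have key : ∀ k, k ≤ N → (∀ j, j < k → ρ j ∉ T i) →
      (pathWeight (w i) ρ k : ℕ∞) + DD E own i (w i) (T i) hE (N - k) (ρ k) ≤ d := by
    intro k
    induction k with
    | zero =>
        intro _ _
        simp only [pathWeight_zero, Nat.cast_zero, zero_add, Nat.sub_zero]
        rw [h0]
        exact le_of_eq rfl
    | succ k ih =>
        intro hk hno
        have h1 := ih (by omega) (fun j hj => hno j (by omega))
        have hnotT : ρ k ∉ T i := hno k (by omega)
        have harith : N - k = (N - (k+1)) + 1 := by omega
        have hstep : (w i (ρ k) (ρ (k+1)) : ℕ∞) +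
            DD E own i (w i) (T i) hE (N - (k+1)) (ρ (k+1)) ≤
            DD E own i (w i) (T i) hE (N - k) (ρ k) := by
          by_cases hown : own (ρ k) = i
          · rw [hcons k hown]
            simp only [hσB, histList_length, histList_getLastD]
            rw [harith]
            exact moveB_opt E own i (w i) (T i) hE _ hnotT hown
          · rw [harith]
            show _ ≤ DD E own i (w i) (T i) hE ((N - (k+1)) + 1) (ρ k)
            simp only [DD, if_neg hnotT, if_neg hown]
            exact Finset.le_sup'
              (fun u => (w i (ρ k) u : ℕ∞) + DD E own i (w i) (T i) hE (N - (k+1)) u)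
              ((mem_succs E).2 (hplay k))
        calc (pathWeight (w i) ρ (k+1) : ℕ∞) + DD E own i (w i) (T i) hE (N - (k+1)) (ρ (k+1))
            = (pathWeight (w i) ρ k : ℕ∞) + ((w i (ρ k) (ρ (k+1)) : ℕ∞) +
                DD E own i (w i) (T i) hE (N - (k+1)) (ρ (k+1))) := by
              rw [pathWeight_succ]; push_cast; ring
          _ ≤ (pathWeight (w i) ρ k : ℕ∞) + DD E own i (w i) (T i) hE (N - k) (ρ k) :=
              add_le_add le_rfl hstep
          _ ≤ d := h1
  have hvis : ∃ j, j ≤ N ∧ ρ j ∈ T i := by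
    by_contra hc
    push_neg at hc
    have hkey := key N le_rfl (fun j hj => hc j (le_of_lt hj))
    rw [Nat.sub_self] at hkey
    have hT : ρ N ∉ T i := hc N le_rfl
    have h2 : DD E own i (w i) (T i) hE 0 (ρ N) = ⊤ := by simp [DD, hT]
    rw [h2, add_top] at hkey
    exact hdt (top_le_iff.1 hkey)
  obtain ⟨j0, hj0N, hj0⟩ := hvis
  have hex : ∃ n, ρ n ∈ T i := ⟨j0, hj0⟩
  rw [cost_eq hex]
  have hfind : Nat.find hex ≤ N := le_trans (Nat.find_le hj0) hj0N
  have hkey := key (Nat.find hex) hfind (fun j hj => Nat.find_min hex hj)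
  exact le_trans le_self_add hkey

end Determinacy

lemma histList_getElem? (π : ℕ → V) {k j : ℕ} (h : j ≤ k) :
    (histList π k)[j]? = some (π j) := by
  simp [histList, Nat.lt_succ_iff, h]

lemma histList_chain'_succ {E : V → V → Prop} {π : ℕ → V} {k : ℕ}
    (h1 : List.Chain' E (histList π k)) (h2 : E (π k) (π (k+1))) :
    List.Chain' E (histList π (k+1)) := by
  rw [histList_succ, List.Chain', List.isChain_append]
  refine ⟨h1, List.isChain_singleton _, ?_⟩
  intro x hx y hy
  rw [histList_getLast?] at hx
  simp at hx hy
  subst hx; subst hy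
  exact h2

section BuildPlay

variable (f : List V → V) (v0 : V)

noncomputable def histSeq : ℕ → List V
  | 0 => [v0]
  | (k+1) => histSeq k ++ [f (histSeq k)]

noncomputable def bplay : ℕ → V := fun k => (histSeq f v0 k).getLastD v0

lemma bplay_zero : bplay f v0 0 = v0 := rfl

lemma histSeq_eq : ∀ k, histSeq f v0 k = histList (bplay f v0) k := by
  intro k
  induction k with
  | zero =>
      show [v0] = histList _ 0
      rw [histList_zero]; rfl
  | succ k ih =>
      show histSeq f v0 k ++ [f (histSeq f v0 k)] = _
      rw [histList_succ, ← ih]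
      congr 1
      show [f (histSeq f v0 k)] = [bplay f v0 (k+1)]
      congr 1
      show f (histSeq f v0 k) = (histSeq f v0 (k+1)).getLastD v0
      show f (histSeq f v0 k) = (histSeq f v0 k ++ [f (histSeq f v0 k)]).getLastD v0
      rw [List.getLastD_concat]

lemma bplay_succ (k : ℕ) : bplay f v0 (k+1) = f (histList (bplay f v0) k) := by
  rw [← histSeq_eq]
  show (histSeq f v0 k ++ [f (histSeq f v0 k)]).getLastD v0 = _
  rw [List.getLastD_concat]

end BuildPlay

section BuildProf

variable {P' : Type*} (own : V → P') (prof : P' → List V → V) (v0 : V)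

noncomputable def profPlay : ℕ → V :=
  bplay (fun l => prof (own (l.getLastD v0)) l) v0

lemma profPlay_zero : profPlay own prof v0 0 = v0 := rfl

lemma profPlay_consistent : ProfConsistent own prof (profPlay own prof v0) := by
  intro k
  show profPlay own prof v0 (k+1) = _
  unfold profPlay
  rw [bplay_succ]
  rw [histList_getLastD]

lemma profPlay_isPlay {E : V → V → Prop}
    (hstrat : ∀ j, IsStrategyFor E own (j) (prof j)) :
    IsPlay E (profPlay own prof v0) := by
  set π := profPlay own prof v0 with hπ
  have estep : ∀ k, List.Chain' E (histList π k) → E (π k) (π (k+1)) := by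
    intro k hch
    have hrw : π (k+1) = prof (own (π k)) (histList π k) := profPlay_consistent own prof v0 k
    rw [hrw]
    cases k with
    | zero =>
        have hl : histList π 0 = [] ++ [π 0] := by rw [histList_zero]; rfl
        rw [hl] at hch ⊢
        exact hstrat _ [] (π 0) hch rfl
    | succ m =>
        rw [histList_succ] at hch ⊢
        exact hstrat _ _ (π (m+1)) hch rfl
  have main : ∀ k, List.Chain' E (histList π k) ∧ E (π k) (π (k+1)) := by
    intro k
    induction k with
    | zero =>
        have hch : List.Chain' E (histList π 0) := by
          rw [histList_zero]; exact List.isChain_singleton _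
        exact ⟨hch, estep 0 hch⟩
    | succ m ih =>
        have hch := histList_chain'_succ ih.1 ih.2
        exact ⟨hch, estep (m+1) hch⟩
  exact fun k => (main k).2

end BuildProf

section Reverse

variable [Fintype V] {t : ℕ} (E : V → V → Prop)
  (own : V → Fin (t + 1)) (w : Fin (t + 1) → V → V → ℕ) (T : Fin (t + 1) → Set V)
  (v0 : V) (c : ℕ)

lemma reverse_dir (hE : ∀ u, ∃ v, E u v) (π' : ℕ → V) (hplay : IsPlay E π') (h0 : π' 0 = v0)
    (hVVC : VisitValConsistent E own w T {i | i ≠ 0} π')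
    (hc : cost (w 0) (T 0) π' ≤ (c : ℕ∞)) :
    ∃ (σ : Fin (t + 1) → List V → V) (π : ℕ → V),
      IsNE E own w T v0 σ π ∧ cost (w 0) (T 0) π ≤ (c : ℕ∞) := by
  classical
  set pun : Fin (t+1) → V → V := fun i => punish E own i (w i) (T i) hE with hpun_def
  set fb : V → V := fun x => Classical.choose (hE x) with hfb
  have fb_edge : ∀ x, E x (fb x) := fun x => Classical.choose_spec (hE x)
  set devP : List V → ℕ → Prop := fun l k =>
    k + 2 ≤ l.length ∧ l.take (k+1) = histList π' k ∧ l[k+1]? ≠ some (π' (k+1)) with hdevP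
  have hdevP_iff : ∀ l k, devP l k ↔
      (k + 2 ≤ l.length ∧ l.take (k+1) = histList π' k ∧ l[k+1]? ≠ some (π' (k+1))) :=
    fun l k => Iff.rfl
  set σ : Fin (t+1) → List V → V := fun j l =>
    if l = histList π' (l.length - 1) then π' l.length
    else if h : ∃ k, devP l k then
      (if j = own (π' (Nat.find h)) then fb (l.getLastD v0)
       else pun (own (π' (Nat.find h))) (l.getLastD v0))
    else fb (l.getLastD v0) with hσ
  have hstrat : ∀ j, IsStrategyFor E own j (σ j) := by
    intro j l u hch hownu
    show E u (σ j (l ++ [u]))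
    rw [hσ]
    simp only
    split
    · next heq =>
        have hlen : (l ++ [u]).length - 1 = l.length := by simp
        have hu : u = π' l.length := by
          have h1 := List.getLastD_concat (a := v0) (b := u) (l := l)
          rw [heq, hlen, histList_getLastD] at h1
          exact h1.symm
        have h2 : (l ++ [u]).length = l.length + 1 := by simp
        rw [h2, hu]
        exact hplay l.length
    · split
      · split
        · rw [List.getLastD_concat]
          exact fb_edge u
        · rw [List.getLastD_concat]
          exact punish_edge E own _ (w _) (T _) hE u
      · rw [List.getLastD_concat]
        exact fb_edge u
  have hprofC : ProfConsistent own σ π' := by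
    intro k
    rw [hσ]
    simp only
    rw [if_pos (by rw [histList_length]; simp)]
    rw [histList_length]
  refine ⟨σ, π', ⟨hstrat, hplay, h0, hprofC, ?_⟩, hc⟩
  intro i hi0 τ hτ π'' hplay'' h0'' hcons''
  by_cases hsame : ∀ k, π'' k = π' k
  · have : π'' = π' := funext hsame
    rw [this]
  have hdiff : ∃ k, π'' k ≠ π' k := by push_neg at hsame; exact hsame
  have hK1 : Nat.find hdiff ≠ 0 := by
    intro h
    have := Nat.find_spec hdiff
    rw [h, h0'', h0] at this
    exact this rfl
  set K := Nat.find hdiff - 1 with hKdef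
  have hagree : ∀ j ≤ K, π'' j = π' j := by
    intro j hj
    by_contra hne
    have hle : Nat.find hdiff ≤ j := Nat.find_le hne
    omega
  have hKne : π'' (K+1) ≠ π' (K+1) := by
    have : K + 1 = Nat.find hdiff := by omega
    rw [this]
    exact Nat.find_spec hdiff
  have hownK : own (π' K) = i := by
    by_contra hno
    have h1 := hcons'' K
    rw [Function.update_of_ne (by rw [hagree K le_rfl]; exact hno) τ σ] at h1
    have h2 : histList π'' K = histList π' K := (histList_eq_iff _ _ _).2 hagree
    rw [h2] at h1
    rw [hσ] at h1
    simp only at h1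
    rw [if_pos (by rw [histList_length]; simp), histList_length] at h1
    exact hKne h1
  have hnotpre : ∀ k, K + 1 ≤ k → histList π'' k ≠ histList π' k := by
    intro k hk heq
    exact hKne (((histList_eq_iff _ _ _).1 heq) (K+1) hk)
  have hfindK : ∀ k, K + 1 ≤ k → ∀ (h : ∃ k', devP (histList π'' k) k'),
      Nat.find h = K := by
    intro k hk h
    rw [Nat.find_eq_iff]
    constructor
    · refine ⟨by rw [histList_length]; omega, ?_, ?_⟩
      · rw [histList_take _ _ _ (by omega)]
        exact (histList_eq_iff _ _ _).2 hagree
      · rw [histList_getElem? _ (by omega)]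
        simp only [Ne, Option.some.injEq]
        exact hKne
    · intro m hm
      rintro ⟨hm1, hm2, hm3⟩
      apply hm3
      rw [histList_getElem? _ (by rw [histList_length] at hm1; omega)]
      exact congrArg some (hagree (m+1) (by omega))
  have hdevEx : ∀ k, K + 1 ≤ k → ∃ k', devP (histList π'' k) k' := by
    intro k hk
    refine ⟨K, by rw [histList_length]; omega, ?_, ?_⟩
    · rw [histList_take _ _ _ (by omega)]
      exact (histList_eq_iff _ _ _).2 hagree
    · rw [histList_getElem? _ (by omega)]
      simp only [Ne, Option.some.injEq]
      exact hKne
  have hpunish : ∀ k, K + 1 ≤ k → own (π'' k) ≠ i → π'' (k+1) = pun i (π'' k) := by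
    intro k hk howni
    have h1 := hcons'' k
    rw [Function.update_of_ne howni τ σ] at h1
    rw [hσ] at h1
    simp only at h1
    rw [if_neg (by rw [histList_length]; simpa using hnotpre k hk)] at h1
    rw [dif_pos (hdevEx k hk)] at h1
    rw [hfindK k hk (hdevEx k hk), hownK] at h1
    rw [if_neg howni, histList_getLastD] at h1
    exact h1
  set ρ : ℕ → V := fun m => π'' (K + m) with hρ
  have hρplay : IsPlay E ρ := by
    intro m
    show E (π'' (K + m)) (π'' (K + m + 1))
    exact hplay'' (K + m)
  have hρpun : ∀ m, own (ρ m) ≠ i → ρ (m+1) = pun i (ρ m) := by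
    intro m hm
    cases m with
    | zero =>
        exfalso
        apply hm
        show own (π'' (K + 0)) = i
        show own (π'' K) = i
        rw [hagree K le_rfl]
        exact hownK
    | succ m' =>
        show π'' (K + (m'+1) + 1) = pun i (π'' (K + (m'+1)))
        exact hpunish (K + (m'+1)) (by omega) hm
  have hlemA : dval E own i (w i) (T i) hE (ρ 0) ≤ cost (w i) (T i) ρ :=
    lemA E own i (w i) (T i) hE ρ hρplay hρpun
  have hρ0 : ρ 0 = π' K := by
    show π'' (K + 0) = _
    show π'' K = _
    exact hagree K le_rfl
  by_cases hvisited : ∃ j, j ≤ K ∧ π' j ∈ T i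
  · obtain ⟨j0, hj0, hj0T⟩ := hvisited
    have := cost_eq_of_agree (w := w i) (T := T i) (n := K)
      (fun j hj => (hagree j hj).symm) ⟨j0, hj0, hj0T⟩
    rw [this]
  · push_neg at hvisited
    have hnov : ¬ ∃ k, k < K ∧ π' k ∈ T i := by
      rintro ⟨k, hk, hkT⟩
      exact hvisited k (by omega) hkT
    have hval := hVVC i hi0 K hownK (by simpa using hnov)
    have hlemB := lemB E own i hE w T (π' K)
    have hcostπ' : cost (w i) (T i) π' =
        (pathWeight (w i) π' K : ℕ∞) + cost (w i) (T i) (fun m => π' (K + m)) :=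
      cost_shift_add (fun j hj => hvisited j (by omega))
    have hcostπ'' : cost (w i) (T i) π'' =
        (pathWeight (w i) π'' K : ℕ∞) + cost (w i) (T i) (fun m => π'' (K + m)) :=
      cost_shift_add (fun j hj => by rw [hagree j (by omega)]; exact hvisited j (by omega))
    rw [hcostπ', hcostπ'']
    have hpw : pathWeight (w i) π' K = pathWeight (w i) π'' K :=
      pathWeight_congr (fun j hj => (hagree j hj).symm)
    rw [← hpw]
    refine add_le_add le_rfl ?_
    calc cost (w i) (T i) (fun m => π' (K + m)) ≤ Val E own w T i (π' K) := hval
      _ ≤ dval E own i (w i) (T i) hE (π' K) := hlemB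
      _ = dval E own i (w i) (T i) hE (ρ 0) := by rw [hρ0]
      _ ≤ cost (w i) (T i) ρ := hlemA

end Reverse

section Forward

variable [Fintype V] {t : ℕ} (E : V → V → Prop)
  (own : V → Fin (t + 1)) (w : Fin (t + 1) → V → V → ℕ) (T : Fin (t + 1) → Set V)
  (v0 : V)

lemma forward_VVC (hE : ∀ u, ∃ v, E u v) (σ : Fin (t+1) → List V → V) (π : ℕ → V)
    (hNE : IsNE E own w T v0 σ π) :
    VisitValConsistent E own w T {i | i ≠ 0} π := by
  classical
  obtain ⟨hstrat, hplay, h0, hcons, hdev⟩ := hNE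
  intro i hi n hown hnov
  by_contra hgt
  have hlt : Val E own w T i (π n) < cost (w i) (T i) (fun m => π (n + m)) :=
    lt_of_not_ge hgt
  rw [Val] at hlt
  obtain ⟨⟨σ', hσ'⟩, hσ'lt⟩ := iInf_lt_iff.1 hlt
  set fb : V → V := fun x => Classical.choose (hE x) with hfb
  have fb_edge : ∀ x, E x (fb x) := fun x => Classical.choose_spec (hE x)
  set τ : List V → V := fun l =>
    if n + 1 ≤ l.length ∧ l.take (n+1) = histList π n then σ' (l.drop n)
    else if l = histList π (l.length - 1) then π l.length
    else fb (l.getLastD v0) with hτ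
  have hτstrat : IsStrategyFor E own i τ := by
    intro l u hch hownu
    show E u (τ (l ++ [u]))
    rw [hτ]
    simp only
    split
    · next hcond =>
        have hn : n ≤ l.length := by
          have := hcond.1
          simp at this
          omega
        have hdrop : (l ++ [u]).drop n = l.drop n ++ [u] :=
          List.drop_append_of_le_length hn
        rw [hdrop]
        refine hσ' (l.drop n) u ?_ hownu
        rw [← hdrop]
        exact hch.suffix (List.drop_suffix n (l ++ [u]))
    · split
      · next heq =>
          have hlen : (l ++ [u]).length - 1 = l.length := by simp
          have hu : u = π l.length := by
            have h1 := List.getLastD_concat (a := v0) (b := u) (l := l)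
            rw [heq, hlen, histList_getLastD] at h1
            exact h1.symm
          have h2 : (l ++ [u]).length = l.length + 1 := by simp
          rw [h2, hu]
          exact hplay l.length
      · rw [List.getLastD_concat]
        exact fb_edge u
  set prof := Function.update σ i τ with hprof
  have hprofstrat : ∀ j, IsStrategyFor E own j (prof j) := by
    intro j
    rcases eq_or_ne j i with rfl | hne
    · rw [hprof, Function.update_self]
      exact hτstrat
    · rw [hprof, Function.update_of_ne hne]
      exact hstrat j
  set π'' : ℕ → V := profPlay own prof v0 with hπ''
  have h0'' : π'' 0 = v0 := rfl
  have hplay'' : IsPlay E π'' := profPlay_isPlay own prof v0 hprofstrat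
  have hcons'' : ProfConsistent own prof π'' := profPlay_consistent own prof v0
  have hagree : ∀ j, j ≤ n → π'' j = π j := by
    intro j
    induction j using Nat.strong_induction_on with
    | _ j ihj =>
      intro hj
      match j with
      | 0 => rw [h0'', h0]
      | (k+1) =>
          have hhist : histList π'' k = histList π k :=
            (histList_eq_iff _ _ _).2 (fun m hm => ihj m (by omega) (by omega))
          have hk' : π'' k = π k := ihj k (by omega) (by omega)
          have h1 := hcons'' k
          rw [hprof] at h1
          rcases eq_or_ne (own (π'' k)) i with hio | hio
          · rw [hio, Function.update_self, hhist] at h1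
            rw [hτ] at h1
            simp only at h1
            rw [if_neg (by
              rintro ⟨hc1, -⟩
              rw [histList_length] at hc1
              omega)] at h1
            rw [if_pos (by rw [histList_length]; simp)] at h1
            rw [histList_length] at h1
            exact h1
          · rw [Function.update_of_ne hio, hhist, hk'] at h1
            rw [h1, ← hcons k]
  set ρ : ℕ → V := fun m => π'' (n + m) with hρ
  have hρ0 : ρ 0 = π n := by
    show π'' (n + 0) = _
    show π'' n = _
    exact hagree n le_rfl
  have hρplay : IsPlay E ρ := fun m => hplay'' (n + m)
  have hρcons : ConsistentFor own i σ' ρ := by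
    intro m hmo
    have h1 := hcons'' (n + m)
    rw [hprof] at h1
    have hio : own (π'' (n + m)) = i := hmo
    rw [hio, Function.update_self] at h1
    rw [hτ] at h1
    simp only at h1
    rw [if_pos (by
      refine ⟨by rw [histList_length]; omega, ?_⟩
      rw [histList_take _ _ _ (by omega)]
      exact (histList_eq_iff _ _ _).2 hagree)] at h1
    show π'' (n + (m + 1)) = σ' (histList ρ m)
    have hdrop : (histList π'' (n + m)).drop n = histList (fun m' => π'' (n + m')) m :=
      histList_drop π'' n m
    rw [← hdrop]
    show π'' (n + m + 1) = _
    exact h1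
  have hcost : cost (w i) (T i) ρ < cost (w i) (T i) (fun m => π (n + m)) := by
    refine lt_of_le_of_lt ?_ hσ'lt
    exact le_iSup (fun (p : {p : ℕ → V // IsPlay E p ∧ p 0 = π n ∧
      ConsistentFor own i σ' p}) => cost (w i) (T i) p.1) ⟨ρ, hρplay, hρ0, hρcons⟩
  have hNEdev := hdev i hi τ hτstrat π'' hplay'' h0'' (by rw [← hprof]; exact hcons'')
  have hnov' : ∀ j, j < n → π j ∉ T i := fun j hj hT => hnov ⟨j, hj, hT⟩
  have hd1 : cost (w i) (T i) π =
      (pathWeight (w i) π n : ℕ∞) + cost (w i) (T i) (fun m => π (n + m)) :=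
    cost_shift_add hnov'
  have hd2 : cost (w i) (T i) π'' =
      (pathWeight (w i) π'' n : ℕ∞) + cost (w i) (T i) (fun m => π'' (n + m)) :=
    cost_shift_add (fun j hj => by
      rw [hagree j (by omega)]
      exact hnov' j hj)
  have hpw : pathWeight (w i) π'' n = pathWeight (w i) π n :=
    pathWeight_congr (fun j hj => hagree j hj)
  rw [hd1, hd2, hpw] at hNEdev
  have hstrict : (pathWeight (w i) π n : ℕ∞) + cost (w i) (T i) ρ <
      (pathWeight (w i) π n : ℕ∞) + cost (w i) (T i) (fun m => π (n + m)) :=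
    WithTop.add_lt_add_left (ENat.coe_ne_top _) hcost
  exact absurd (lt_of_le_of_lt hNEdev hstrict) (lt_irrefl _)

end Forward

section Pump

variable [Fintype V] {t : ℕ} (E : V → V → Prop)
  (own : V → Fin (t + 1)) (w : Fin (t + 1) → V → V → ℕ) (T : Fin (t + 1) → Set V)
  (v0 : V) (c : ℕ)

lemma cut_lemma (π : ℕ → V) (a b p p' : ℕ)
    (hplay : IsPlay E π) (h0 : π 0 = v0)
    (hVVC : VisitValConsistent E own w T {i | i ≠ 0} π)
    (hc : cost (w 0) (T 0) π ≤ (c : ℕ∞))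
    (hlasso : IsLasso π a b)
    (hInv : ∀ i : Fin (t+1), (∃ k, π k ∈ T i) → ∃ k, k ≤ a ∧ π k ∈ T i)
    (hpp : p < p') (hp'a : p' ≤ a) (heqv : π p = π p')
    (hNF : ∀ (i : Fin (t+1)) k, p < k → k ≤ p' → π k ∈ T i → ∃ j, j ≤ p ∧ π j ∈ T i) :
    ∃ π₂ : ℕ → V, IsPlay E π₂ ∧ π₂ 0 = v0 ∧
      VisitValConsistent E own w T {i | i ≠ 0} π₂ ∧ cost (w 0) (T 0) π₂ ≤ (c : ℕ∞) ∧
      IsLasso π₂ (a - (p' - p)) b ∧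
      (∀ i : Fin (t+1), (∃ k, π₂ k ∈ T i) → ∃ k, k ≤ a - (p' - p) ∧ π₂ k ∈ T i) := by
  classical
  set δ := p' - p with hδ
  have hδpos : 0 < δ := by omega
  have hpδ : p + δ = p' := by omega
  set π₂ : ℕ → V := fun k => if k < p then π k else π (k + δ) with hπ₂
  have f1 : ∀ k, p ≤ k → π₂ k = π (k + δ) := by
    intro k hk
    show (if k < p then π k else π (k + δ)) = _
    rw [if_neg (by omega)]
  have f2 : ∀ k, k ≤ p → π₂ k = π k := by
    intro k hk
    rcases Nat.lt_or_ge k p with h | h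
    · show (if k < p then π k else π (k + δ)) = _
      rw [if_pos h]
    · have hkp : k = p := by omega
      subst hkp
      rw [f1 k le_rfl, hpδ, ← heqv]
  have hplay₂ : IsPlay E π₂ := by
    intro k
    rcases Nat.lt_or_ge (k+1) p with h | h
    · rw [f2 k (by omega), f2 (k+1) (by omega)]
      exact hplay k
    · rcases Nat.lt_or_ge k p with h2 | h2
      · have : k + 1 = p := by omega
        rw [f2 k (by omega), f2 (k+1) (by omega)]
        exact hplay k
      · rw [f1 k h2, f1 (k+1) (by omega)]
        have : k + 1 + δ = (k + δ) + 1 := by omega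
        rw [this]
        exact hplay (k + δ)
  have h0₂ : π₂ 0 = v0 := by rw [f2 0 (Nat.zero_le p), h0]
  have hlasso₂ : IsLasso π₂ (a - δ) b := by
    refine ⟨hlasso.1, ?_⟩
    intro k hk
    have hkp : p ≤ k := by omega
    rw [f1 k hkp, f1 (k + b) (by omega)]
    have h1 : k + b + δ = (k + δ) + b := by omega
    rw [h1]
    exact hlasso.2 (k + δ) (by omega)
  have hmem : ∀ k, ∃ k0, π₂ k = π k0 := by
    intro k
    rcases Nat.lt_or_ge k p with h | h
    · exact ⟨k, f2 k (by omega)⟩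
    · exact ⟨k + δ, f1 k h⟩
  have hInv₂ : ∀ i : Fin (t+1), (∃ k, π₂ k ∈ T i) → ∃ k, k ≤ a - δ ∧ π₂ k ∈ T i := by
    intro i ⟨k, hk⟩
    obtain ⟨k0, hk0⟩ := hmem k
    obtain ⟨k1, hk1a, hk1⟩ := hInv i ⟨k0, by rwa [← hk0]⟩
    rcases Nat.lt_or_ge p k1 with h | h
    · rcases Nat.lt_or_ge p' k1 with h2 | h2
      · exact ⟨k1 - δ, by omega, by rw [f1 (k1 - δ) (by omega), show k1 - δ + δ = k1 by omega]; exact hk1⟩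
      · obtain ⟨j, hjp, hj⟩ := hNF i k1 h h2 hk1
        exact ⟨j, by omega, by rw [f2 j hjp]; exact hj⟩
    · exact ⟨k1, by omega, by rw [f2 k1 h]; exact hk1⟩
  -- weight identities
  have wid : ∀ (ww : V → V → ℕ) (m : ℕ),
      pathWeight ww π₂ (p + m) + pathWeight ww π (p + δ) =
        pathWeight ww π (p + m + δ) + pathWeight ww π p := by
    intro ww m
    induction m with
    | zero =>
        have : pathWeight ww π₂ p = pathWeight ww π p := pathWeight_congr (fun j hj => f2 j hj)
        rw [Nat.add_zero, this, Nat.add_comm (pathWeight ww π p)]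
    | succ m ih =>
        have hW : ww (π₂ (p+m)) (π₂ (p+m+1)) = ww (π (p+m+δ)) (π (p+m+δ+1)) := by
          rw [f1 (p+m) (by omega), f1 (p+m+1) (by omega)]
          congr 2
          omega
        have e1 : p + (m + 1) = (p + m) + 1 := by omega
        have e2 : p + m + 1 + δ = (p + m + δ) + 1 := by omega
        rw [e1, e2, pathWeight_succ, pathWeight_succ, hW]
        calc pathWeight ww π₂ (p + m) + ww (π (p+m+δ)) (π (p+m+δ+1)) + pathWeight ww π (p + δ)
            = (pathWeight ww π₂ (p + m) + pathWeight ww π (p + δ)) + ww (π (p+m+δ)) (π (p+m+δ+1)) := by ring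
          _ = (pathWeight ww π (p + m + δ) + pathWeight ww π p) + ww (π (p+m+δ)) (π (p+m+δ+1)) := by rw [ih]
          _ = pathWeight ww π (p + m + δ) + ww (π (p+m+δ)) (π (p+m+δ+1)) + pathWeight ww π p := by ring
  have wle : ∀ (ww : V → V → ℕ) (n : ℕ), p ≤ n →
      pathWeight ww π₂ n ≤ pathWeight ww π (n + δ) := by
    intro ww n hn
    have h1 := wid ww (n - p)
    rw [show p + (n - p) = n by omega] at h1
    have h2 : pathWeight ww π p ≤ pathWeight ww π (p + δ) := pathWeight_mono ww π (by omega)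
    omega
  -- cost of player 0
  have hvis0 : ∃ k, π k ∈ T 0 := by
    by_contra hno
    rw [cost_eq_top hno] at hc
    exact ENat.coe_ne_top c (top_le_iff.1 hc)
  have hcost₂ : cost (w 0) (T 0) π₂ ≤ (c : ℕ∞) := by
    set f0 := Nat.find hvis0 with hf0
    have hf0spec : π f0 ∈ T 0 := Nat.find_spec hvis0
    have hf0gap : ¬ (p < f0 ∧ f0 ≤ p') := by
      rintro ⟨hg1, hg2⟩
      obtain ⟨j, hjp, hj⟩ := hNF 0 f0 hg1 hg2 hf0spec
      have hle : Nat.find hvis0 ≤ j := Nat.find_le hj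
      rw [← hf0] at hle
      omega
    rcases Nat.lt_or_ge p f0 with hca | hca
    · -- f0 > p', new visit at f0 - δ
      have hf0p' : p' < f0 := by omega
      have hwit : π₂ (f0 - δ) ∈ T 0 := by
        rw [f1 (f0 - δ) (by omega), show f0 - δ + δ = f0 by omega]
        exact hf0spec
      have hvis₂ : ∃ k, π₂ k ∈ T 0 := ⟨f0 - δ, hwit⟩
      rw [cost_eq hvis₂]
      have hle1 : Nat.find hvis₂ ≤ f0 - δ := Nat.find_le hwit
      have hle2 : pathWeight (w 0) π₂ (Nat.find hvis₂) ≤ pathWeight (w 0) π₂ (f0 - δ) :=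
        pathWeight_mono _ _ hle1
      have hle3 : pathWeight (w 0) π₂ (f0 - δ) ≤ pathWeight (w 0) π (f0 - δ + δ) :=
        wle (w 0) (f0 - δ) (by omega)
      rw [show f0 - δ + δ = f0 by omega] at hle3
      have hcπ : cost (w 0) (T 0) π = (pathWeight (w 0) π (Nat.find hvis0) : ℕ∞) := cost_eq hvis0
      rw [hcπ, ← hf0] at hc
      exact le_trans (Nat.cast_le.2 (le_trans hle2 hle3)) hc
    · -- f0 ≤ p : costs agree
      have := cost_eq_of_agree (w := w 0) (T := T 0) (n := p)
        (fun j hj => f2 j hj) ⟨f0, hca, by rw [f2 f0 hca]; exact hf0spec⟩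
      rw [this]
      exact hc
  have hVVC₂ : VisitValConsistent E own w T {i | i ≠ 0} π₂ := by
    intro i hi n' hown₂ hnov₂
    have hno₂ : ∀ k, k < n' → π₂ k ∉ T i := fun k hk hT => hnov₂ ⟨k, hk, hT⟩
    rcases Nat.lt_or_ge p n' with hcase | hcase
    · -- n' > p
      have heqn' : π₂ n' = π (n' + δ) := f1 n' (by omega)
      have hsub1 : ∀ k, k < n' + δ → π k ∉ T i := by
        intro k hk hkT
        rcases Nat.lt_or_ge p k with h2 | h2
        · rcases Nat.lt_or_ge p' k with h3 | h3
          · exact hno₂ (k - δ) (by omega)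
              (by rw [f1 (k - δ) (by omega), show k - δ + δ = k by omega]; exact hkT)
          · obtain ⟨j, hjp, hj⟩ := hNF i k h2 h3 hkT
            exact hno₂ j (by omega) (by rw [f2 j hjp]; exact hj)
        · exact hno₂ k (by omega) (by rw [f2 k h2]; exact hkT)
      have hval := hVVC i hi (n' + δ) (by rw [← heqn']; exact hown₂)
        (by rintro ⟨k, hk1, hk2⟩; exact hsub1 k hk1 hk2)
      have hshift : (fun m => π₂ (n' + m)) = (fun m => π (n' + δ + m)) := by
        funext m
        rw [f1 (n' + m) (by omega)]
        congr 1
        omega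
      rw [hshift, heqn']
      exact hval
    · -- n' ≤ p
      have heqn' : π₂ n' = π n' := f2 n' hcase
      have hno : ∀ k, k < n' → π k ∉ T i := by
        intro k hk hkT
        exact hno₂ k hk (by rw [f2 k (by omega)]; exact hkT)
      have hval := hVVC i hi n' (by rw [← heqn']; exact hown₂)
        (by rintro ⟨k, hk1, hk2⟩; exact hno k hk1 hk2)
      rw [heqn']
      by_cases hvx : ∃ m, (fun m' => π (n' + m')) m ∈ T i
      · set A := Nat.find hvx with hA
        have hAspec : π (n' + A) ∈ T i := Nat.find_spec hvx
        have hAmin : ∀ m, m < A → π (n' + m) ∉ T i := fun m hm => Nat.find_min hvx hm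
        have hglobal : ∀ k, k < n' + A → π k ∉ T i := by
          intro k hk hkT
          rcases Nat.lt_or_ge k n' with h2 | h2
          · exact hno k h2 hkT
          · exact hAmin (k - n') (by omega)
              (by rw [show n' + (k - n') = k by omega]; exact hkT)
        have hgap : ¬ (p < n' + A ∧ n' + A ≤ p') := by
          rintro ⟨hg1, hg2⟩
          obtain ⟨j, hjp, hj⟩ := hNF i (n' + A) hg1 hg2 hAspec
          exact hglobal j (by omega) hj
        rcases Nat.lt_or_ge p (n' + A) with hA2 | hA2
        · have hAp' : p' < n' + A := by omega
          have hwit₂ : π₂ (n' + (n' + A - δ - n')) ∈ T i := by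
            rw [show n' + (n' + A - δ - n') = n' + A - δ by omega]
            rw [f1 (n' + A - δ) (by omega), show n' + A - δ + δ = n' + A by omega]
            exact hAspec
          have hvx₂ : ∃ m, (fun m' => π₂ (n' + m')) m ∈ T i := ⟨_, hwit₂⟩
          rw [cost_eq hvx₂]
          rw [cost_eq hvx] at hval
          have hfind₂ : Nat.find hvx₂ ≤ n' + A - δ - n' := Nat.find_le hwit₂
          have hm1 : pathWeight (w i) (fun m' => π₂ (n' + m')) (Nat.find hvx₂) ≤
              pathWeight (w i) (fun m' => π₂ (n' + m')) (n' + A - δ - n') :=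
            pathWeight_mono _ _ hfind₂
          have hs1 := pathWeight_shift (w i) π₂ n' (n' + A - δ - n')
          have hs2 := pathWeight_shift (w i) π n' A
          have hpw0 : pathWeight (w i) π₂ n' = pathWeight (w i) π n' :=
            pathWeight_congr (fun j hj => f2 j (by omega))
          have hwle := wle (w i) (n' + A - δ) (by omega)
          rw [show n' + A - δ + δ = n' + A by omega] at hwle
          rw [show n' + (n' + A - δ - n') = n' + A - δ by omega] at hs1
          have hmain : pathWeight (w i) (fun m' => π₂ (n' + m')) (n' + A - δ - n') ≤
              pathWeight (w i) (fun m' => π (n' + m')) A := by omega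
          exact le_trans (Nat.cast_le.2 (le_trans hm1 hmain)) hval
        · have hag : ∀ m, m ≤ A → π₂ (n' + m) = π (n' + m) := fun m hm => f2 (n' + m) (by omega)
          have heqc := cost_eq_of_agree (w := w i) (T := T i) (n := A) hag
            ⟨A, le_rfl, by rw [hag A le_rfl]; exact hAspec⟩
          rw [heqc]
          exact hval
      · rw [cost_eq_top hvx] at hval
        rw [top_le_iff.1 hval]
        exact le_top
  exact ⟨π₂, hplay₂, h0₂, hVVC₂, hcost₂, hlasso₂, hInv₂⟩

lemma to_lasso (π : ℕ → V) (hplay : IsPlay E π) (h0 : π 0 = v0)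
    (hVVC : VisitValConsistent E own w T {i | i ≠ 0} π)
    (hc : cost (w 0) (T 0) π ≤ (c : ℕ∞)) :
    ∃ (π₁ : ℕ → V) (a b : ℕ), IsPlay E π₁ ∧ π₁ 0 = v0 ∧
      VisitValConsistent E own w T {i | i ≠ 0} π₁ ∧ cost (w 0) (T 0) π₁ ≤ (c : ℕ∞) ∧
      IsLasso π₁ a b ∧ b ≤ Fintype.card V ∧
      (∀ i : Fin (t+1), (∃ k, π₁ k ∈ T i) → ∃ k, k ≤ a ∧ π₁ k ∈ T i) := by
  classical
  set F : Fin (t+1) → ℕ := fun i => if h : ∃ k, π k ∈ T i then Nat.find h else 0 with hF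
  set M := Finset.univ.sup F with hM
  have hMfirst : ∀ i : Fin (t+1), (∃ k, π k ∈ T i) →
      ∃ k, k ≤ M ∧ π k ∈ T i ∧ (∀ k', k' < k → π k' ∉ T i) := by
    intro i h
    have hFi : F i = Nat.find h := by rw [hF]; exact dif_pos h
    refine ⟨F i, Finset.le_sup (Finset.mem_univ i), ?_, ?_⟩
    · rw [hFi]; exact Nat.find_spec h
    · intro k' hk'
      rw [hFi] at hk'
      exact Nat.find_min h hk'
  have hcard : Fintype.card V < Fintype.card (Fin (Fintype.card V + 1)) := by simp
  obtain ⟨x, y, hxy, hxyeq⟩ := Fintype.exists_ne_map_eq_of_card_lt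
    (fun j : Fin (Fintype.card V + 1) => π (M + (j : ℕ))) hcard
  have hxyv : (x : ℕ) ≠ (y : ℕ) := fun h => hxy (Fin.ext h)
  obtain ⟨p, p', hpp', hpM, hp'M, hpe⟩ : ∃ p p', p < p' ∧ M ≤ p ∧
      p' ≤ M + Fintype.card V ∧ π p = π p' := by
    rcases hxyv.lt_or_gt with h | h
    · exact ⟨M + (x : ℕ), M + (y : ℕ), by omega, by omega,
        by have := y.isLt; omega, hxyeq⟩
    · exact ⟨M + (y : ℕ), M + (x : ℕ), by omega, by omega,
        by have := x.isLt; omega, hxyeq.symm⟩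
  set δ := p' - p with hδ
  have hδpos : 0 < δ := by omega
  set π₁ : ℕ → V := fun k => if k < p then π k else π (p + (k - p) % δ) with hπ₁
  have g2 : ∀ k, p ≤ k → π₁ k = π (p + (k - p) % δ) := by
    intro k hk
    show (if k < p then π k else π (p + (k - p) % δ)) = _
    rw [if_neg (by omega)]
  have g1 : ∀ k, k ≤ p → π₁ k = π k := by
    intro k hk
    rcases Nat.lt_or_ge k p with h | h
    · show (if k < p then π k else π (p + (k - p) % δ)) = _
      rw [if_pos h]
    · have hkp : k = p := by omega
      subst hkp
      rw [g2 k le_rfl]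
      simp [Nat.sub_self]
  have hmodlt : ∀ k : ℕ, (k - p) % δ < δ := fun k => Nat.mod_lt _ hδpos
  have hplay₁ : IsPlay E π₁ := by
    intro k
    rcases Nat.lt_or_ge (k + 1) p with h | h
    · rw [g1 k (by omega), g1 (k+1) (by omega)]
      exact hplay k
    · rcases Nat.lt_or_ge k p with h2 | h2
      · rw [g1 k (by omega), g1 (k+1) (by omega)]
        exact hplay k
      · rw [g2 k h2, g2 (k+1) (by omega)]
        set r := (k - p) % δ with hr
        have hrlt : r < δ := hmodlt k
        have hk1 : k + 1 - p = (k - p) + 1 := by omega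
        have hdm : k - p = δ * ((k - p)/δ) + r := by
          rw [hr]; exact (Nat.div_add_mod _ _).symm
        rcases Nat.lt_or_ge (r + 1) δ with h3 | h3
        · have hmod : (k + 1 - p) % δ = r + 1 := by
            rw [hk1, hdm, Nat.add_assoc, Nat.mul_add_mod]
            exact Nat.mod_eq_of_lt h3
          rw [hmod, show p + (r + 1) = (p + r) + 1 by omega]
          exact hplay (p + r)
        · have hrδ : r + 1 = δ := by omega
          have hmod : (k + 1 - p) % δ = 0 := by
            rw [hk1, hdm, Nat.add_assoc, Nat.mul_add_mod, hrδ, Nat.mod_self]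
          rw [hmod, Nat.add_zero]
          have he := hplay (p + r)
          rw [show p + r + 1 = p' by omega, ← hpe] at he
          exact he
  have h0₁ : π₁ 0 = v0 := by rw [g1 0 (Nat.zero_le p), h0]
  have hlasso₁ : IsLasso π₁ p δ := by
    refine ⟨hδpos, ?_⟩
    intro k hk
    rw [g2 k hk, g2 (k + δ) (by omega)]
    congr 2
    rw [show k + δ - p = (k - p) + δ by omega, Nat.add_mod_right]
  have hmem : ∀ k, ∃ k0, π₁ k = π k0 := by
    intro k
    rcases Nat.lt_or_ge k p with h | h
    · exact ⟨k, g1 k (by omega)⟩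
    · exact ⟨p + (k - p) % δ, g2 k h⟩
  have hInv₁ : ∀ i : Fin (t+1), (∃ k, π₁ k ∈ T i) → ∃ k, k ≤ p ∧ π₁ k ∈ T i := by
    intro i ⟨k, hk⟩
    obtain ⟨k0, hk0⟩ := hmem k
    obtain ⟨k1, hk1M, hk1, -⟩ := hMfirst i ⟨k0, by rwa [← hk0]⟩
    exact ⟨k1, by omega, by rw [g1 k1 (by omega)]; exact hk1⟩
  have hvis0 : ∃ k, π k ∈ T 0 := by
    by_contra hno
    rw [cost_eq_top hno] at hc
    exact ENat.coe_ne_top c (top_le_iff.1 hc)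
  have hcost₁ : cost (w 0) (T 0) π₁ ≤ (c : ℕ∞) := by
    obtain ⟨k1, hk1M, hk1, -⟩ := hMfirst 0 hvis0
    have heqc := cost_eq_of_agree (w := w 0) (T := T 0) (n := p)
      (fun j hj => g1 j hj) ⟨k1, by omega, by rw [g1 k1 (by omega)]; exact hk1⟩
    rw [heqc]
    exact hc
  have hVVC₁ : VisitValConsistent E own w T {i | i ≠ 0} π₁ := by
    intro i hi n' hown₁ hnov₁
    have hno₁ : ∀ k, k < n' → π₁ k ∉ T i := fun k hk hT => hnov₁ ⟨k, hk, hT⟩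
    rcases Nat.lt_or_ge p n' with hcase | hcase
    · -- p < n'
      set r := (n' - p) % δ with hr
      have hrlt : r < δ := hmodlt n'
      set o := p + r with ho
      have hrle : r ≤ n' - p := by rw [hr]; exact Nat.mod_le _ _
      have heqn' : π₁ n' = π o := g2 n' (by omega)
      by_cases hTn' : π₁ n' ∈ T i
      · have hz : cost (w i) (T i) (fun m => π₁ (n' + m)) = 0 :=
          cost_zero (show π₁ (n' + 0) ∈ T i from hTn')
        rw [hz]
        exact zero_le
      · have hdiv : n' - p - r = δ * ((n' - p)/δ) := by
          have hdm := Nat.div_add_mod (n' - p) δ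
          rw [← hr] at hdm
          omega
        have hsub1 : ∀ k, k < o → π k ∉ T i := by
          intro k hk hkT
          rcases Nat.lt_or_ge k p with h2 | h2
          · exact hno₁ k (by omega) (by rw [g1 k (by omega)]; exact hkT)
          · have hkr : k - p < r := by omega
            have hq : π₁ (n' - r + (k - p)) = π k := by
              rw [g2 (n' - r + (k - p)) (by omega)]
              congr 1
              have he1 : n' - r + (k - p) - p = δ * ((n' - p)/δ) + (k - p) := by omega
              rw [he1, Nat.mul_add_mod, Nat.mod_eq_of_lt (by omega)]
              omega
            exact hno₁ (n' - r + (k - p)) (by omega) (by rw [hq]; exact hkT)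
        have hvalo := hVVC i hi o (by rw [← heqn']; exact hown₁)
          (by rintro ⟨k, hk1, hk2⟩; exact hsub1 k hk1 hk2)
        by_cases hvx : ∃ m, (fun m' => π (o + m')) m ∈ T i
        · exfalso
          have hAspec : π (o + Nat.find hvx) ∈ T i := Nat.find_spec hvx
          obtain ⟨k1, hk1M, hk1, -⟩ := hMfirst i ⟨_, hAspec⟩
          have hk1geo : o ≤ k1 := by
            by_contra hlt
            exact hsub1 k1 (by omega) hk1
          have hk1o : k1 = o := by omega
          apply hTn'
          rw [heqn', ← hk1o]
          exact hk1
        · rw [cost_eq_top hvx] at hvalo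
          rw [heqn', top_le_iff.1 hvalo]
          exact le_top
    · -- n' ≤ p
      have heqn' : π₁ n' = π n' := g1 n' hcase
      have hno : ∀ k, k < n' → π k ∉ T i := by
        intro k hk hkT
        exact hno₁ k hk (by rw [g1 k (by omega)]; exact hkT)
      have hval := hVVC i hi n' (by rw [← heqn']; exact hown₁)
        (by rintro ⟨k, hk1, hk2⟩; exact hno k hk1 hk2)
      rw [heqn']
      by_cases hvx : ∃ m, (fun m' => π (n' + m')) m ∈ T i
      · set A := Nat.find hvx with hA
        have hAspec : π (n' + A) ∈ T i := Nat.find_spec hvx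
        have hglobal : ∀ k, k < n' + A → π k ∉ T i := by
          intro k hk hkT
          rcases Nat.lt_or_ge k n' with h2 | h2
          · exact hno k h2 hkT
          · exact Nat.find_min hvx (m := k - n') (by omega)
              (show π (n' + (k - n')) ∈ T i from by
                rw [show n' + (k - n') = k by omega]; exact hkT)
        obtain ⟨k1, hk1M, hk1, -⟩ := hMfirst i ⟨_, hAspec⟩
        have hk1ge : n' + A ≤ k1 := by
          by_contra hlt
          exact hglobal k1 (by omega) hk1
        have hAp : n' + A ≤ p := by omega
        have hag : ∀ m, m ≤ A → π₁ (n' + m) = π (n' + m) := fun m hm => g1 (n' + m) (by omega)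
        have heqc := cost_eq_of_agree (w := w i) (T := T i) (n := A) hag
          ⟨A, le_rfl, by rw [hag A le_rfl]; exact hAspec⟩
        rw [heqc]
        exact hval
      · rw [cost_eq_top hvx] at hval
        rw [top_le_iff.1 hval]
        exact le_top
  exact ⟨π₁, p, δ, hplay₁, h0₁, hVVC₁, hcost₁, hlasso₁, by omega, hInv₁⟩

lemma find_gap (S : Finset ℕ) (hS : S.card ≤ t + 1) (N a : ℕ) (hN : 0 < N)
    (ha : (t + 2) * N < a) :
    ∃ l, l + N ≤ a ∧ ∀ k ∈ S, ¬(l < k ∧ k ≤ l + N) := by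
  classical
  by_contra hcon
  push_neg at hcon
  set g : ℕ → ℕ := fun j => Nat.rec
    (if h : 0 + N ≤ a then (hcon 0 h).choose else 0)
    (fun _ prev => if h : prev + N ≤ a then (hcon prev h).choose else prev + 1) j with hg
  have hNP : N ≤ (t + 2) * N := Nat.le_mul_of_pos_left N (by omega)
  have hstep : ∀ j, g j + N ≤ a → (g (j+1) ∈ S ∧ g j < g (j+1) ∧ g (j+1) ≤ g j + N) := by
    intro j hj
    have hgj : g (j+1) = (hcon (g j) hj).choose := by
      show (if h : g j + N ≤ a then (hcon (g j) h).choose else g j + 1) = _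
      rw [dif_pos hj]
    rw [hgj]
    obtain ⟨h1, h2, h3⟩ := (hcon (g j) hj).choose_spec
    exact ⟨h1, h2, h3⟩
  have hbase : g 0 ∈ S ∧ 0 < g 0 ∧ g 0 ≤ N := by
    have h0a : 0 + N ≤ a := by omega
    have hg0 : g 0 = (hcon 0 h0a).choose := by
      show (if h : 0 + N ≤ a then (hcon 0 h).choose else 0) = _
      rw [dif_pos h0a]
    rw [hg0]
    obtain ⟨h1, h2, h3⟩ := (hcon 0 h0a).choose_spec
    exact ⟨h1, h2, by omega⟩
  have hind : ∀ j, j ≤ t + 1 → g j ∈ S ∧ 0 < g j ∧ g j ≤ (j + 1) * N := by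
    intro j
    induction j with
    | zero =>
        intro _
        exact ⟨hbase.1, hbase.2.1, by have := hbase.2.2; omega⟩
    | succ j ih =>
        intro hj
        obtain ⟨h1, h2, h3⟩ := ih (by omega)
        have hm : (j + 2) * N ≤ (t + 2) * N := Nat.mul_le_mul_right N (by omega)
        have he : (j + 2) * N = (j + 1) * N + N := by ring
        have hja : g j + N ≤ a := by omega
        obtain ⟨k1, k2, k3⟩ := hstep j hja
        refine ⟨k1, by omega, ?_⟩
        have he2 : (j + 1 + 1) * N = (j + 1) * N + N := by ring
        omega
  have hmono : ∀ j, j ≤ t → g j < g (j + 1) := by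
    intro j hj
    obtain ⟨-, -, h3⟩ := hind j (by omega)
    have hm : (j + 2) * N ≤ (t + 2) * N := Nat.mul_le_mul_right N (by omega)
    have he : (j + 2) * N = (j + 1) * N + N := by ring
    have hja : g j + N ≤ a := by omega
    exact (hstep j hja).2.1
  have hsm : ∀ j2 j1, j1 < j2 → j2 ≤ t + 1 → g j1 < g j2 := by
    intro j2
    induction j2 with
    | zero => intro j1 h; omega
    | succ j ih =>
        intro j1 h hle
        rcases Nat.lt_or_ge j1 j with h2 | h2
        · exact lt_trans (ih j1 h2 (by omega)) (hmono j (by omega))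
        · have hj1 : j1 = j := by omega
          subst hj1
          exact hmono j1 (by omega)
  have hinj : Finset.card (Finset.univ : Finset (Fin (t+2))) ≤ S.card := by
    apply Finset.card_le_card_of_injOn (fun j : Fin (t+2) => g (j : ℕ))
    · intro j _
      exact (hind (j : ℕ) (by have := j.isLt; omega)).1
    · intro j1 _ j2 _ heq
      by_contra hne
      have hv : (j1 : ℕ) ≠ (j2 : ℕ) := fun h => hne (Fin.ext h)
      rcases hv.lt_or_gt with h | h
      · exact absurd heq (ne_of_lt (hsm _ _ h (by have := j2.isLt; omega)))
      · exact absurd heq.symm (ne_of_lt (hsm _ _ h (by have := j1.isLt; omega)))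
  simp only [Finset.card_univ, Fintype.card_fin] at hinj
  omega

lemma shrink : ∀ a : ℕ, ∀ (π : ℕ → V) (b : ℕ),
    IsPlay E π → π 0 = v0 → VisitValConsistent E own w T {i | i ≠ 0} π →
    cost (w 0) (T 0) π ≤ (c : ℕ∞) → IsLasso π a b → b ≤ Fintype.card V →
    (∀ i : Fin (t+1), (∃ k, π k ∈ T i) → ∃ k, k ≤ a ∧ π k ∈ T i) →
    ∃ (π₂ : ℕ → V) (a₂ b₂ : ℕ), IsPlay E π₂ ∧ π₂ 0 = v0 ∧ IsLasso π₂ a₂ b₂ ∧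
      a₂ + b₂ ≤ ((t + 1) + 2) * Fintype.card V ∧
      VisitValConsistent E own w T {i | i ≠ 0} π₂ ∧ cost (w 0) (T 0) π₂ ≤ (c : ℕ∞) := by
  intro a
  induction a using Nat.strong_induction_on with
  | _ a iha =>
    intro π b hplay h0 hVVC hc hlasso hb hInv
    rcases le_or_gt (a + b) (((t + 1) + 2) * Fintype.card V) with hle | hgt
    · exact ⟨π, a, b, hplay, h0, hlasso, hle, hVVC, hc⟩
    · have hcardpos : 0 < Fintype.card V := Fintype.card_pos_iff.2 ⟨v0⟩
      have ha : (t + 2) * Fintype.card V < a := by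
        have he : ((t+1)+2) * Fintype.card V = (t+2) * Fintype.card V + Fintype.card V := by
          ring
        omega
      classical
      set F : Fin (t+1) → ℕ := fun i => if h : ∃ k, π k ∈ T i then Nat.find h else 0 with hF
      set S : Finset ℕ := Finset.univ.image F with hS
      have hScard : S.card ≤ t + 1 :=
        le_trans Finset.card_image_le (by simp)
      obtain ⟨l, hlN, hgap⟩ := find_gap S hScard (Fintype.card V) a hcardpos ha
      obtain ⟨x, y, hxy, hxyeq⟩ := Fintype.exists_ne_map_eq_of_card_lt
        (fun j : Fin (Fintype.card V + 1) => π (l + (j : ℕ))) (by simp)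
      have hxyv : (x:ℕ) ≠ (y:ℕ) := fun h => hxy (Fin.ext h)
      obtain ⟨p, p', hpp', hpl, hp'l, hpe⟩ : ∃ p p', p < p' ∧ l ≤ p ∧
          p' ≤ l + Fintype.card V ∧ π p = π p' := by
        rcases hxyv.lt_or_gt with h | h
        · exact ⟨l + x, l + y, by omega, by omega, by have := y.isLt; omega, hxyeq⟩
        · exact ⟨l + y, l + x, by omega, by omega, by have := x.isLt; omega, hxyeq.symm⟩
      have hNF : ∀ (i : Fin (t+1)) k, p < k → k ≤ p' → π k ∈ T i →
          ∃ j, j ≤ p ∧ π j ∈ T i := by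
        intro i k hk1 hk2 hkT
        have hvisi : ∃ k', π k' ∈ T i := ⟨k, hkT⟩
        have hFi : F i = Nat.find hvisi := by rw [hF]; exact dif_pos hvisi
        have hFile : F i ≤ k := by rw [hFi]; exact Nat.find_le hkT
        have hFiS : F i ∈ S := by rw [hS]; exact Finset.mem_image_of_mem F (Finset.mem_univ i)
        have hFinotgap := hgap (F i) hFiS
        push_neg at hFinotgap
        have hFip : F i ≤ p := by
          rcases Nat.lt_or_ge l (F i) with h2 | h2
          · have := hFinotgap h2; omega
          · omega
        exact ⟨F i, hFip, by rw [hFi]; exact Nat.find_spec hvisi⟩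
      obtain ⟨π₂, hplay₂, h0₂, hVVC₂, hc₂, hlasso₂, hInv₂⟩ :=
        cut_lemma E own w T v0 c π a b p p' hplay h0 hVVC hc hlasso hInv hpp'
          (by omega) hpe hNF
      exact iha (a - (p' - p)) (by omega) π₂ b hplay₂ h0₂ hVVC₂ hc₂ hlasso₂ hb hInv₂

end Pump

end CNS


/-- There are a strategy `σ0` of player 0 and a `σ0`-fixed Nash equilibrium whose
outcome `π` satisfies `cost₀ π ≤ c`, iff there is a lasso play `μ (ν)^ω` from `v0`
that is Visit `Val*`-consistent for the players `≠ 0`, has `cost₀ ≤ c`, and has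
`|μν| ≤ (|P|+2)·|V|` (here `|P| = t+1`). -/
theorem cns_characterization {V : Type*} [Fintype V] {t : ℕ}
    (E : V → V → Prop) (hE : ∀ u, ∃ v, E u v) (own : V → Fin (t + 1))
    (w : Fin (t + 1) → V → V → ℕ) (T : Fin (t + 1) → Set V) (v0 : V) (c : ℕ) :
    (∃ (σ : Fin (t + 1) → List V → V) (π : ℕ → V),
        IsNE E own w T v0 σ π ∧ cost (w 0) (T 0) π ≤ (c : ℕ∞)) ↔
      (∃ (π' : ℕ → V) (a b : ℕ), IsPlay E π' ∧ π' 0 = v0 ∧ IsLasso π' a b ∧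
        a + b ≤ ((t + 1) + 2) * Fintype.card V ∧
        VisitValConsistent E own w T {i | i ≠ 0} π' ∧
        cost (w 0) (T 0) π' ≤ (c : ℕ∞)) := by
  constructor
  · rintro ⟨σ, π, hNE, hcost⟩
    have hVVC := CNS.forward_VVC E own w T v0 hE σ π hNE
    obtain ⟨hstrat, hplay, h0, hcons, hdev⟩ := hNE
    obtain ⟨π₁, a, b, hplay₁, h0₁, hVVC₁, hc₁, hlasso₁, hb₁, hInv₁⟩ :=
      CNS.to_lasso E own w T v0 c π hplay h0 hVVC hcost
    obtain ⟨π₂, a₂, b₂, hplay₂, h0₂, hlasso₂, hbound, hVVC₂, hc₂⟩ :=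
      CNS.shrink E own w T v0 c a π₁ b hplay₁ h0₁ hVVC₁ hc₁ hlasso₁ hb₁ hInv₁
    exact ⟨π₂, a₂, b₂, hplay₂, h0₂, hlasso₂, hbound, hVVC₂, hc₂⟩
  · rintro ⟨π', a, b, hplay, h0, hlasso, hbound, hVVC, hc⟩
    exact CNS.reverse_dir E own w T v0 c hE π' hplay h0 hVVC hc
end

section
/- In the two-player setting (players 0 and 1) with initial vertex v_0, let c ∈ ℕ. There exists a strategy σ_0 of player 0 such that every σ_0-fixed Nash equilibrium outcome π satisfies cost_0(π) ≤ c, if and only if there exists a c-witness. -/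
/-!
Player 1 can realise every play consistent with `σ0`, so the `σ0`-fixed Nash equilibrium
outcomes are exactly the `σ0`-consistent plays of minimal cost for player 1.

Given `σ0`, such a minimal play `π` is a `c`-witness: after a deviation of player 1, player 0
keeps playing `σ0`, and a continuation that does not raise the cost of player 1 is again minimal,
hence an equilibrium outcome, hence of cost at most `c` for player 0.

Conversely, given a `c`-witness `π`, player 0 follows `π` and, once player 1 deviates, switches to
the winning strategy for that deviation. An equilibrium outcome costs player 1 at most as much as
`π`, so it is either `π` or a deviation after which player 0 won with cost at most `c`.
-/

open scoped Classical

/-- `σ` is a strategy for the player owning the set of vertices `Vi`. -/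
def IsStrategy {V : Type*} (E : V → V → Prop) (Vi : Set V) (σ : List V → V) : Prop :=
  ∀ (l : List V) (u : V), List.Chain' E (l ++ [u]) → u ∈ Vi → E u (σ (l ++ [u]))

/-- A play is consistent with the strategy `σ` of the player owning `Vi`. -/
def PlayConsistent {V : Type*} (Vi : Set V) (σ : List V → V) (π : ℕ → V) : Prop :=
  ∀ k, π k ∈ Vi → π (k + 1) = σ (histList π k)


/-- In the two-player setting (player 0 owns `V0`, player 1 owns `V0ᶜ`), the play `π`
is the outcome of a `σ0`-fixed Nash equilibrium: for some strategy `σ1` of player 1,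
`π` is the outcome of `(σ0, σ1)` from `v0` and player 1 has no profitable deviation. -/
def NEOutcome2 {V : Type*} (E : V → V → Prop) (V0 : Set V) (v0 : V)
    (w1 : V → V → ℕ) (T1 : Set V) (σ0 : List V → V) (π : ℕ → V) : Prop :=
  ∃ σ1 : List V → V, IsStrategy E V0ᶜ σ1 ∧
    IsPlay E π ∧ π 0 = v0 ∧ PlayConsistent V0 σ0 π ∧ PlayConsistent V0ᶜ σ1 π ∧
    ∀ τ1 : List V → V, IsStrategy E V0ᶜ τ1 →
      ∀ π' : ℕ → V, IsPlay E π' → π' 0 = v0 →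
        PlayConsistent V0 σ0 π' → PlayConsistent V0ᶜ τ1 π' →
        cost w1 T1 π ≤ cost w1 T1 π'

/-- The play `h · ρ` obtained by concatenating the history `h` with the play `ρ`. -/
def concatPlay {V : Type*} (h : List V) (ρ : ℕ → V) : ℕ → V := fun k =>
  if hk : k < h.length then h.get ⟨k, hk⟩ else ρ (k - h.length)

/-- Player 0 (owning `V0`) wins from `v` for the objective `Ω`. -/
def Player0Wins {V : Type*} (E : V → V → Prop) (V0 : Set V) (v : V)
    (Ω : (ℕ → V) → Prop) : Prop :=
  ∃ σ : List V → V, IsStrategy E V0 σ ∧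
    ∀ ρ, IsPlay E ρ → ρ 0 = v → PlayConsistent V0 σ ρ → Ω ρ

/-- `π` is a `c`-witness: a play from `v0` with `cost₀ π ≤ c` such that, with
`d = cost₁ π`, for every deviation `hv` of `π` (where `last h = π m` is owned by
player 1), player 0 wins from `v` for the objective
`cost₀(h·ρ) ≤ c or cost₁(h·ρ) > d`. -/
def IsCWitness {V : Type*} (E : V → V → Prop) (V0 : Set V) (v0 : V)
    (w0 w1 : V → V → ℕ) (T0 T1 : Set V) (c : ℕ) (π : ℕ → V) : Prop :=
  IsPlay E π ∧ π 0 = v0 ∧ cost w0 T0 π ≤ (c : ℕ∞) ∧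
    ∀ (m : ℕ) (v : V), π m ∉ V0 → E (π m) v → v ≠ π (m + 1) →
      Player0Wins E V0 v (fun ρ =>
        cost w0 T0 (concatPlay (histList π m) ρ) ≤ (c : ℕ∞) ∨
        cost w1 T1 π < cost w1 T1 (concatPlay (histList π m) ρ))

section Histories
variable {V : Type*}

@[simp]
lemma length_histList (π : ℕ → V) (k : ℕ) : (histList π k).length = k + 1 := by
  simp [histList]

@[simp]
lemma getElem_histList (π : ℕ → V) (k j : ℕ) (h : j < (histList π k).length) :
    (histList π k)[j] = π j := by
  simp [histList]

lemma getElem?_histList (π : ℕ → V) (k j : ℕ) :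
    (histList π k)[j]? = if j ≤ k then some (π j) else none := by
  split_ifs with hj
  · rw [List.getElem?_eq_getElem (by simp; omega), getElem_histList]
  · exact List.getElem?_eq_none (by simp; omega)

lemma getD_histList (π : ℕ → V) {k j : ℕ} (hj : j ≤ k) (d : V) :
    (histList π k).getD j d = π j := by
  simp [List.getD_eq_getElem?_getD, hj]

lemma histList_succ (π : ℕ → V) (k : ℕ) :
    histList π (k + 1) = histList π k ++ [π (k + 1)] := by
  simp [histList, List.range_succ]

lemma getLast?_histList (π : ℕ → V) (k : ℕ) : (histList π k).getLast? = some (π k) := by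
  cases k with
  | zero => rfl
  | succ k => rw [histList_succ, List.getLast?_concat]

lemma histList_congr {π π' : ℕ → V} {k : ℕ} (h : ∀ j ≤ k, π j = π' j) :
    histList π k = histList π' k := by
  simp only [histList, List.map_inj_left, List.mem_range]
  exact fun j hj => h j (by omega)

lemma drop_histList (π : ℕ → V) (m k : ℕ) :
    (histList π (m + 1 + k)).drop (m + 1) = histList (fun i => π (m + 1 + i)) k := by
  apply List.ext_getElem (by simp; omega)
  intro j _ _
  simp

lemma IsPlay.chain_histList {E : V → V → Prop} {π : ℕ → V} (hπ : IsPlay E π) (k : ℕ) :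
    List.IsChain E (histList π k) := by
  rw [histList, List.isChain_map, List.isChain_range_succ]
  exact fun m _ => hπ m

lemma IsPlay.shift {E : V → V → Prop} {π : ℕ → V} (hπ : IsPlay E π) (n : ℕ) :
    IsPlay E (fun i => π (n + i)) :=
  fun k => by simpa only [Nat.add_assoc] using hπ (n + k)

lemma exists_first_ne {π π' : ℕ → V} (h0 : π' 0 = π 0) (hne : π' ≠ π) :
    ∃ m, (∀ j ≤ m, π' j = π j) ∧ π' (m + 1) ≠ π (m + 1) := by
  have hex : ∃ k, π' k ≠ π k := Function.ne_iff.1 hne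
  obtain ⟨m, hm⟩ : ∃ m, Nat.find hex = m + 1 :=
    Nat.exists_eq_succ_of_ne_zero fun h => (h ▸ Nat.find_spec hex) h0
  refine ⟨m, fun j hj => ?_, hm ▸ Nat.find_spec hex⟩
  exact not_not.1 (Nat.find_min hex (by omega))

end Histories

section Concatenation
variable {V : Type*} {π ρ : ℕ → V} {m : ℕ}

lemma concatPlay_histList_of_le {k : ℕ} (hk : k ≤ m) :
    concatPlay (histList π m) ρ k = π k := by
  simp [concatPlay, Nat.lt_succ_of_le hk]

lemma concatPlay_histList_add (k : ℕ) : concatPlay (histList π m) ρ (m + 1 + k) = ρ k := by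
  rw [concatPlay, dif_neg (by simp; omega), length_histList, Nat.add_sub_cancel_left]

lemma histList_concatPlay_of_le {k : ℕ} (hk : k ≤ m) :
    histList (concatPlay (histList π m) ρ) k = histList π k :=
  histList_congr fun _ hj => concatPlay_histList_of_le (hj.trans hk)

lemma histList_concatPlay_add (k : ℕ) :
    histList (concatPlay (histList π m) ρ) (m + 1 + k) = histList π m ++ histList ρ k := by
  apply List.ext_getElem (by simp; omega)
  intro j _ _
  rcases le_or_gt j m with hj | hj
  · rw [List.getElem_append_left (by simp; omega)]
    simp [concatPlay_histList_of_le hj]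
  · obtain ⟨i, rfl⟩ : ∃ i, j = m + 1 + i := ⟨j - (m + 1), by omega⟩
    rw [List.getElem_append_right (by simp)]
    simp [concatPlay_histList_add]

lemma concatPlay_histList_shift {π' : ℕ → V} (h : ∀ j ≤ m, π' j = π j) :
    concatPlay (histList π m) (fun i => π' (m + 1 + i)) = π' := by
  funext k
  rcases le_or_gt k m with hk | hk
  · rw [concatPlay_histList_of_le hk, h k hk]
  · obtain ⟨i, rfl⟩ : ∃ i, k = m + 1 + i := ⟨k - (m + 1), by omega⟩
    rw [concatPlay_histList_add]

lemma IsPlay.concatPlay {E : V → V → Prop} (hπ : IsPlay E π) (hρ : IsPlay E ρ)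
    (he : E (π m) (ρ 0)) : IsPlay E (concatPlay (histList π m) ρ) := by
  intro k
  rcases lt_trichotomy k m with h | rfl | h
  · rw [concatPlay_histList_of_le h.le, concatPlay_histList_of_le h]
    exact hπ k
  · rw [concatPlay_histList_of_le le_rfl, ← Nat.add_zero (k + 1), concatPlay_histList_add]
    exact he
  · obtain ⟨j, rfl⟩ : ∃ j, k = m + 1 + j := ⟨k - (m + 1), by omega⟩
    rw [concatPlay_histList_add, Nat.add_assoc, concatPlay_histList_add]
    exact hρ j

end Concatenation

section Strategies
variable {V : Type*} {E : V → V → Prop} {Vi : Set V}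

def ConsistentPlays (E : V → V → Prop) (Vi : Set V) (σ : List V → V) (v : V) : Set (ℕ → V) :=
  {π | IsPlay E π ∧ π 0 = v ∧ PlayConsistent Vi σ π}

lemma IsStrategy.rel_histList {σ : List V → V} (hσ : IsStrategy E Vi σ) {π : ℕ → V}
    (hπ : IsPlay E π) {k : ℕ} (hk : π k ∈ Vi) : E (π k) (σ (histList π k)) := by
  cases k with
  | zero => exact hσ [] (π 0) (List.isChain_singleton _) hk
  | succ k =>
    rw [histList_succ]
    exact hσ _ _ (histList_succ π k ▸ hπ.chain_histList (k + 1)) hk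

-- Lets a strategy be defined by its moves along the plays that matter: elsewhere any legal
-- move will do.
noncomputable def legalize (hE : ∀ u : V, ∃ v, E u v) (σ : List V → V) (l : List V) : V :=
  match l.getLast? with
  | some u => if E u (σ l) then σ l else Classical.choose (hE u)
  | none => σ l

variable (hE : ∀ u : V, ∃ v, E u v) (σ : List V → V)

lemma legalize_eq {l : List V} {u : V} (hl : l.getLast? = some u) (h : E u (σ l)) :
    legalize hE σ l = σ l := by
  simp [legalize, hl, h]

lemma rel_legalize {l : List V} {u : V} (hl : l.getLast? = some u) :
    E u (legalize hE σ l) := by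
  simp only [legalize, hl]
  split_ifs with h
  exacts [h, Classical.choose_spec (hE u)]

lemma isStrategy_legalize : IsStrategy E Vi (legalize hE σ) :=
  fun _ _ _ _ => rel_legalize hE σ List.getLast?_concat

lemma playConsistent_legalize_iff {π : ℕ → V}
    (hedge : ∀ k, π k ∈ Vi → E (π k) (σ (histList π k))) :
    PlayConsistent Vi (legalize hE σ) π ↔ PlayConsistent Vi σ π := by
  refine forall_congr' fun k => imp_congr_right fun hk => ?_
  rw [legalize_eq hE σ (getLast?_histList π k) (hedge k hk)]

lemma playConsistent_legalize {π : ℕ → V} (hπ : IsPlay E π) (h : PlayConsistent Vi σ π) :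
    PlayConsistent Vi (legalize hE σ) π :=
  (playConsistent_legalize_iff hE σ fun k hk => h k hk ▸ hπ k).2 h

end Strategies

section Outcomes
variable {V : Type*} {E : V → V → Prop}

def histOf (f : List V → V) (v : V) : ℕ → List V
  | 0 => [v]
  | n + 1 => histOf f v n ++ [f (histOf f v n)]

def playOf (f : List V → V) (v : V) (n : ℕ) : V :=
  (histOf f v n).getLast?.getD v

lemma histList_playOf (f : List V → V) (v : V) (n : ℕ) :
    histList (playOf f v) n = histOf f v n := by
  induction n with
  | zero => rfl
  | succ n ih => simp [histList_succ, ih, playOf, histOf]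

lemma playOf_succ (f : List V → V) (v : V) (n : ℕ) :
    playOf f v (n + 1) = f (histList (playOf f v) n) := by
  simp [playOf, histOf, histList_playOf]

lemma consistentPlays_nonempty (hE : ∀ u : V, ∃ v, E u v) {Vi : Set V} {σ : List V → V}
    (hσ : IsStrategy E Vi σ) (v : V) : (ConsistentPlays E Vi σ v).Nonempty := by
  have hπ : IsPlay E (playOf (legalize hE σ) v) := fun k => by
    rw [playOf_succ]
    exact rel_legalize hE σ (getLast?_histList _ k)
  refine ⟨_, hπ, rfl, ?_⟩
  rw [← playConsistent_legalize_iff hE σ fun k hk => hσ.rel_histList hπ hk]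
  exact fun k _ => playOf_succ _ v k

lemma neOutcome2_iff (hE : ∀ u : V, ∃ v, E u v) {V0 : Set V} {v0 : V} {w1 : V → V → ℕ}
    {T1 : Set V} {σ0 : List V → V} {π : ℕ → V} :
    NEOutcome2 E V0 v0 w1 T1 σ0 π ↔ π ∈ ConsistentPlays E V0 σ0 v0 ∧
      ∀ π' ∈ ConsistentPlays E V0 σ0 v0, cost w1 T1 π ≤ cost w1 T1 π' := by
  have follow : ∀ π : ℕ → V, IsPlay E π →
      PlayConsistent V0ᶜ (legalize hE fun l => π l.length) π :=
    fun π hπ => playConsistent_legalize hE _ hπ fun k _ => by simp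
  constructor
  · rintro ⟨σ1, -, hπ, h0, hσ0, -, hmin⟩
    exact ⟨⟨hπ, h0, hσ0⟩, fun π' ⟨hπ', h0', hσ0'⟩ =>
      hmin _ (isStrategy_legalize hE _) π' hπ' h0' hσ0' (follow π' hπ')⟩
  · rintro ⟨⟨hπ, h0, hσ0⟩, hmin⟩
    exact ⟨_, isStrategy_legalize hE _, hπ, h0, hσ0, follow π hπ,
      fun _ _ π' hπ' h0' hσ0' _ => hmin π' ⟨hπ', h0', hσ0'⟩⟩

end Outcomes

section Witness
variable {V : Type*} {E : V → V → Prop} {V0 : Set V}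

lemma playConsistent_concatPlay {σ : List V → V} {π ρ : ℕ → V} {m : ℕ}
    (hπ : PlayConsistent V0 σ π) (hm : π m ∉ V0)
    (hρ : PlayConsistent V0 (fun l => σ (histList π m ++ l)) ρ) :
    PlayConsistent V0 σ (concatPlay (histList π m) ρ) := by
  intro k hk
  rcases lt_trichotomy k m with h | rfl | h
  · rw [concatPlay_histList_of_le h.le] at hk
    rw [concatPlay_histList_of_le h, histList_concatPlay_of_le h.le]
    exact hπ k hk
  · rw [concatPlay_histList_of_le le_rfl] at hk
    exact absurd hk hm
  · obtain ⟨j, rfl⟩ : ∃ j, k = m + 1 + j := ⟨k - (m + 1), by omega⟩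
    rw [concatPlay_histList_add] at hk
    rw [Nat.add_assoc, concatPlay_histList_add, histList_concatPlay_add]
    exact hρ j hk

lemma concatPlay_mem_consistentPlays (hE : ∀ u : V, ∃ v, E u v) {σ0 : List V → V}
    (hσ0 : IsStrategy E V0 σ0) {π ρ : ℕ → V} {m : ℕ} {v0 : V}
    (hπ : π ∈ ConsistentPlays E V0 σ0 v0) (hm : π m ∉ V0) (he : E (π m) (ρ 0))
    (hρ : IsPlay E ρ) (hρσ : PlayConsistent V0 (legalize hE fun l => σ0 (histList π m ++ l)) ρ) :
    concatPlay (histList π m) ρ ∈ ConsistentPlays E V0 σ0 v0 := by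
  have hplay := hπ.1.concatPlay hρ he
  refine ⟨hplay, (concatPlay_histList_of_le (Nat.zero_le m)).trans hπ.2.1,
    playConsistent_concatPlay hπ.2.2 hm ((playConsistent_legalize_iff hE _ fun k hk => ?_).1 hρσ)⟩
  have := hσ0.rel_histList hplay (k := m + 1 + k) (by rwa [concatPlay_histList_add])
  rwa [concatPlay_histList_add, histList_concatPlay_add] at this

theorem exists_isCWitness (hE : ∀ u : V, ∃ v, E u v) {v0 : V} {w0 w1 : V → V → ℕ}
    {T0 T1 : Set V} {c : ℕ} {σ0 : List V → V} (hσ0 : IsStrategy E V0 σ0)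
    (H : ∀ π, NEOutcome2 E V0 v0 w1 T1 σ0 π → cost w0 T0 π ≤ c) :
    ∃ π, IsCWitness E V0 v0 w0 w1 T0 T1 c π := by
  have hS := consistentPlays_nonempty hE hσ0 v0
  set π := Function.argminOn (cost w1 T1) _ hS
  have hπ : π ∈ ConsistentPlays E V0 σ0 v0 := Function.argminOn_mem _ _ hS
  have hmin : ∀ π' ∈ ConsistentPlays E V0 σ0 v0, cost w1 T1 π ≤ cost w1 T1 π' :=
    fun π' hπ' => Function.argminOn_le _ _ hπ'
  refine ⟨π, hπ.1, hπ.2.1, H π ((neOutcome2_iff hE).2 ⟨hπ, hmin⟩), fun m v hm hv _ => ?_⟩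
  refine ⟨_, isStrategy_legalize hE fun l => σ0 (histList π m ++ l), fun ρ hρ hρ0 hρσ => ?_⟩
  have hcons := concatPlay_mem_consistentPlays hE hσ0 hπ hm (hρ0 ▸ hv) hρ hρσ
  rcases (hmin _ hcons).lt_or_eq with hlt | heq
  · exact Or.inr hlt
  · exact Or.inl (H _ ((neOutcome2_iff hE).2 ⟨hcons, heq ▸ hmin⟩))

end Witness

section Response
variable {V : Type*} {E : V → V → Prop} {V0 : Set V}

/-- The first position at which `h` leaves `π`; it is `h.length` if `h` is a prefix of `π`. -/
noncomputable def leaveIndex (π : ℕ → V) (h : List V) : ℕ :=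
  Nat.find (⟨h.length, by simp⟩ : ∃ j, h[j]? ≠ some (π j))

/-- Follow `π`; once the history has left `π` at position `m + 1` for the vertex `v`, play
`τ m v` on the part of the history from `v` on. -/
noncomputable def followThen (π : ℕ → V) (τ : ℕ → V → List V → V) (h : List V) : V :=
  if leaveIndex π h < h.length then
    τ (leaveIndex π h - 1) (h.getD (leaveIndex π h) (π 0)) (h.drop (leaveIndex π h))
  else π h.length

lemma leaveIndex_histList_self (π : ℕ → V) (k : ℕ) : leaveIndex π (histList π k) = k + 1 := by
  rw [leaveIndex, Nat.find_eq_iff]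
  simp +contextual

lemma followThen_histList_self (π : ℕ → V) (τ : ℕ → V → List V → V) (k : ℕ) :
    followThen π τ (histList π k) = π (k + 1) := by
  simp [followThen, leaveIndex_histList_self]

variable {π π' : ℕ → V} {m : ℕ}

lemma leaveIndex_histList (hagree : ∀ j ≤ m, π' j = π j) (hne : π' (m + 1) ≠ π (m + 1))
    (k : ℕ) : leaveIndex π (histList π' (m + 1 + k)) = m + 1 := by
  rw [leaveIndex, Nat.find_eq_iff]
  refine ⟨by simpa [getElem?_histList] using hne, fun j hj => ?_⟩
  simp [show j ≤ m + 1 + k by omega, hagree j (by omega)]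

lemma followThen_histList (τ : ℕ → V → List V → V) (hagree : ∀ j ≤ m, π' j = π j)
    (hne : π' (m + 1) ≠ π (m + 1)) (k : ℕ) :
    followThen π τ (histList π' (m + 1 + k)) =
      τ m (π' (m + 1)) (histList (fun i => π' (m + 1 + i)) k) := by
  rw [followThen, leaveIndex_histList hagree hne, if_pos (by simp), Nat.add_sub_cancel,
    getD_histList _ (by omega), drop_histList]

lemma playConsistent_shift_of_followThen (hE : ∀ u : V, ∃ v, E u v)
    {τ : ℕ → V → List V → V} (hτ : IsStrategy E V0 (τ m (π' (m + 1)))) (hπ' : IsPlay E π')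
    (hσ : PlayConsistent V0 (legalize hE (followThen π τ)) π')
    (hagree : ∀ j ≤ m, π' j = π j) (hne : π' (m + 1) ≠ π (m + 1)) :
    PlayConsistent V0 (τ m (π' (m + 1))) (fun i => π' (m + 1 + i)) := by
  intro k hk
  have hstep := hσ (m + 1 + k) hk
  rw [legalize_eq hE _ (getLast?_histList π' _), followThen_histList τ hagree hne] at hstep
  · simpa only [Nat.add_assoc] using hstep
  · rw [followThen_histList τ hagree hne]
    exact hτ.rel_histList (hπ'.shift (m + 1)) hk

theorem exists_strategy_of_isCWitness (hE : ∀ u : V, ∃ v, E u v) {v0 : V}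
    {w0 w1 : V → V → ℕ} {T0 T1 : Set V} {c : ℕ} (hπ : IsCWitness E V0 v0 w0 w1 T0 T1 c π) :
    ∃ σ0 : List V → V, IsStrategy E V0 σ0 ∧
      ∀ π', NEOutcome2 E V0 v0 w1 T1 σ0 π' → cost w0 T0 π' ≤ c := by
  obtain ⟨hplay, h0, hcost, hdev⟩ := hπ
  have : Nonempty V := ⟨v0⟩
  choose! τ hτ hwin using hdev
  have hπσ0 : π ∈ ConsistentPlays E V0 (legalize hE (followThen π τ)) v0 :=
    ⟨hplay, h0, playConsistent_legalize hE _ hplay fun k _ => (followThen_histList_self π τ k).symm⟩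
  refine ⟨legalize hE (followThen π τ), isStrategy_legalize hE _, fun π' hπ' => ?_⟩
  obtain ⟨⟨hplay', h0', hσ'⟩, hmin⟩ := (neOutcome2_iff hE).1 hπ'
  by_cases heq : π' = π
  · exact heq ▸ hcost
  obtain ⟨m, hagree, hne⟩ := exists_first_ne (h0'.trans h0.symm) heq
  have hm : π m ∉ V0 := fun hm => hne <| by
    rw [hσ' m (hagree m le_rfl ▸ hm), histList_congr hagree, ← hπσ0.2.2 m hm]
  have hv : E (π m) (π' (m + 1)) := hagree m le_rfl ▸ hplay' m
  have hwon := hwin m _ hm hv hne _ (hplay'.shift (m + 1)) (by simp)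
    (playConsistent_shift_of_followThen hE (hτ m _ hm hv hne) hplay' hσ' hagree hne)
  simp only [concatPlay_histList_shift hagree] at hwon
  exact hwon.resolve_right (not_lt.2 (hmin π hπσ0))

end Response

theorem ncns_iff_cwitness_general {V : Type*} (E : V → V → Prop)
    (hE : ∀ u, ∃ v, E u v) (V0 : Set V) (v0 : V)
    (w0 w1 : V → V → ℕ) (T0 T1 : Set V) (c : ℕ) :
    (∃ σ0 : List V → V, IsStrategy E V0 σ0 ∧
        ∀ π : ℕ → V, NEOutcome2 E V0 v0 w1 T1 σ0 π → cost w0 T0 π ≤ (c : ℕ∞)) ↔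
      ∃ π : ℕ → V, IsCWitness E V0 v0 w0 w1 T0 T1 c π :=
  ⟨fun ⟨_, hσ0, H⟩ => exists_isCWitness hE hσ0 H,
    fun ⟨_, hπ⟩ => exists_strategy_of_isCWitness hE hπ⟩

/-- There is a strategy `σ0` of player 0 such that every `σ0`-fixed Nash equilibrium
outcome `π` has `cost₀ π ≤ c`, iff there is a `c`-witness. -/
theorem ncns_iff_cwitness {V : Type*} [Fintype V] (E : V → V → Prop)
    (hE : ∀ u, ∃ v, E u v) (V0 : Set V) (v0 : V)
    (w0 w1 : V → V → ℕ) (T0 T1 : Set V) (c : ℕ) :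
    (∃ σ0 : List V → V, IsStrategy E V0 σ0 ∧
        ∀ π : ℕ → V, NEOutcome2 E V0 v0 w1 T1 σ0 π → cost w0 T0 π ≤ (c : ℕ∞)) ↔
      ∃ π : ℕ → V, IsCWitness E V0 v0 w0 w1 T0 T1 c π :=
  ncns_iff_cwitness_general E hE V0 v0 w0 w1 T0 T1 c
end
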